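/- arXiv:math/0612118 — 9 statements merged into one kernel-verified Lean document; each statement's English description precedes it below -/
import Mathlib

section
/- For every integer n ≥ 2, the improper integral ∫₀^∞ xⁿ / sinh²(x) dx equals n!/2^(n-1) · ζ(n), where ζ is the Riemann zeta function. -/
open MeasureTheory Real Set

lemma aux_integrable (n : ℕ) {r : ℝ} (hr : 0 < r) :
    IntegrableOn (fun x : ℝ => x ^ n * Real.exp (-(r * x))) (Ioi 0) := by
  have h := integrableOn_rpow_mul_exp_neg_mul_rpow (s := (n:ℝ)) (p := 1)
    (lt_of_lt_of_le (by norm_num) (Nat.cast_nonneg n)) one_pos hr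
  refine h.congr_fun (fun x hx => ?_) measurableSet_Ioi
  rw [mem_Ioi] at hx
  beta_reduce
  rw [Real.rpow_natCast, Real.rpow_one, neg_mul]

lemma aux_integral (n : ℕ) {r : ℝ} (hr : 0 < r) :
    ∫ x in Ioi (0:ℝ), x ^ n * Real.exp (-(r * x)) = n.factorial / r ^ (n + 1) := by
  have h := Real.integral_rpow_mul_exp_neg_mul_Ioi (a := (n:ℝ) + 1) (by positivity) hr
  rw [show ((n:ℝ) + 1) - 1 = (n:ℝ) by ring, Real.Gamma_nat_eq_factorial,
    show ((n:ℝ) + 1) = ((n + 1 : ℕ) : ℝ) by push_cast; ring, Real.rpow_natCast] at h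
  rw [show (∫ x in Ioi (0:ℝ), x ^ n * Real.exp (-(r * x)))
      = ∫ x in Ioi (0:ℝ), x ^ ((n:ℝ)) * Real.exp (-(r * x)) from
    setIntegral_congr_fun measurableSet_Ioi fun x hx => by rw [Real.rpow_natCast], h,
    one_div, inv_pow, div_eq_mul_inv, mul_comm]

lemma aux_pointwise (n : ℕ) {x : ℝ} (hx : 0 < x) :
    ∑' i : ℕ, 4 * ((i : ℝ) + 1) * (x ^ n * Real.exp (-((2 * ((i : ℝ) + 1)) * x)))
      = x ^ n / Real.sinh x ^ 2 := by
  set r : ℝ := Real.exp (-(2 * x)) with hrdef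
  have hr0 : 0 < r := Real.exp_pos _
  have hr1 : r < 1 := Real.exp_lt_one_iff.mpr (by linarith)
  have hr' : ‖r‖ < 1 := by rwa [Real.norm_eq_abs, abs_of_pos hr0]
  have hsum : Summable (fun k : ℕ => (k : ℝ) * r ^ k) :=
    (hasSum_coe_mul_geometric_of_norm_lt_one hr').summable
  have key : ∑' k : ℕ, (k : ℝ) * r ^ k = r / (1 - r) ^ 2 :=
    tsum_coe_mul_geometric_of_norm_lt_one hr'
  have shift : ∑' i : ℕ, ((i : ℝ) + 1) * r ^ (i + 1) = r / (1 - r) ^ 2 := by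
    rw [← key, Summable.tsum_eq_zero_add hsum]
    push_cast
    simp
  have hterm : ∀ i : ℕ, 4 * ((i : ℝ) + 1) * (x ^ n * Real.exp (-((2 * ((i : ℝ) + 1)) * x)))
      = (4 * x ^ n) * (((i : ℝ) + 1) * r ^ (i + 1)) := by
    intro i
    have : Real.exp (-((2 * ((i : ℝ) + 1)) * x)) = r ^ (i + 1) := by
      rw [hrdef, ← Real.exp_nat_mul]
      push_cast
      ring_nf
    rw [this]; ring
  rw [tsum_congr hterm, tsum_mul_left, shift]
  have hs1 : Real.sinh x ^ 2 = (1 - r) ^ 2 / (4 * r) := by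
    have hb : Real.exp (-x) = (Real.exp x)⁻¹ := Real.exp_neg x
    have hc : r = ((Real.exp x)⁻¹) ^ 2 := by
      rw [hrdef, show -(2 * x) = (-x) + (-x) by ring, Real.exp_add, Real.exp_neg, sq]
    have ha : Real.exp x ≠ 0 := (Real.exp_pos x).ne'
    rw [Real.sinh_eq, hb, hc]
    field_simp
    ring
  rw [hs1]
  have h2 : (1 - r) ≠ 0 := by linarith
  field_simp

/-- For every integer `n ≥ 2`, `∫₀^∞ xⁿ / sinh²(x) dx = n!/2^(n-1) · ζ(n)`,
where `ζ(n) = ∑_{k=1}^∞ 1/kⁿ`. -/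
theorem integral_pow_div_sinh_sq (n : ℕ) (hn : 2 ≤ n) :
    ∫ x in Set.Ioi (0 : ℝ), x ^ n / Real.sinh x ^ 2
      = (Nat.factorial n : ℝ) / 2 ^ (n - 1) * ∑' k : ℕ+, 1 / (k : ℝ) ^ n := by
  obtain ⟨m, rfl⟩ := Nat.exists_eq_add_of_le hn
  set f : ℕ → ℝ → ℝ :=
    fun i x => 4 * ((i : ℝ) + 1) * (x ^ (2 + m) * Real.exp (-((2 * ((i : ℝ) + 1)) * x)))
    with hf
  have hkpos : ∀ i : ℕ, (0:ℝ) < 2 * ((i : ℝ) + 1) := fun i => by positivity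
  have h_int : ∀ i, IntegrableOn (f i) (Ioi 0) := fun i =>
    (aux_integrable (2 + m) (hkpos i)).const_mul _
  have h_val : ∀ i, ∫ x in Ioi (0:ℝ), f i x
      = ((2 + m).factorial : ℝ) / 2 ^ (m + 1) * (1 / ((i : ℝ) + 1) ^ (2 + m)) := by
    intro i
    rw [hf]
    simp only
    rw [integral_const_mul, aux_integral (2 + m) (hkpos i)]
    have hk : ((i : ℝ) + 1) ≠ 0 := by positivity
    rw [show 2 + m + 1 = m + 3 by omega, mul_pow]
    field_simp
    ring
  have h_lint : ∀ i, ∫⁻ x in Ioi (0:ℝ), ‖f i x‖ₑ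
      = ENNReal.ofReal (((2 + m).factorial : ℝ) / 2 ^ (m + 1) * (1 / ((i : ℝ) + 1) ^ (2 + m))) := by
    intro i
    rw [← ofReal_integral_norm_eq_lintegral_enorm (h_int i)]
    congr 1
    rw [← h_val i]
    refine setIntegral_congr_fun measurableSet_Ioi fun x hx => ?_
    have hx' : (0:ℝ) < x := hx
    rw [Real.norm_eq_abs, abs_of_nonneg (by positivity)]
  have hc_nonneg : ∀ i : ℕ,
      (0:ℝ) ≤ ((2 + m).factorial : ℝ) / 2 ^ (m + 1) * (1 / ((i : ℝ) + 1) ^ (2 + m)) :=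
    fun i => by positivity
  have hsummable : Summable
      (fun i : ℕ => ((2 + m).factorial : ℝ) / 2 ^ (m + 1) * (1 / ((i : ℝ) + 1) ^ (2 + m))) := by
    apply Summable.mul_left
    have h1 : Summable (fun k : ℕ => 1 / (k : ℝ) ^ (2 + m)) :=
      Real.summable_one_div_nat_pow.mpr (by omega)
    have := (summable_nat_add_iff 1).mpr h1
    refine this.congr fun i => ?_
    push_cast
    ring_nf
  calc ∫ x in Ioi (0:ℝ), x ^ (2 + m) / Real.sinh x ^ 2
      = ∫ x in Ioi (0:ℝ), ∑' i : ℕ, f i x :=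
        (setIntegral_congr_fun measurableSet_Ioi fun x hx =>
          (aux_pointwise (2 + m) hx).symm)
    _ = ∑' i : ℕ, ∫ x in Ioi (0:ℝ), f i x := by
        refine integral_tsum (fun i => (h_int i).aestronglyMeasurable) ?_
        simp_rw [h_lint]
        rw [← ENNReal.ofReal_tsum_of_nonneg hc_nonneg hsummable]
        exact ENNReal.ofReal_ne_top
    _ = ∑' i : ℕ, ((2 + m).factorial : ℝ) / 2 ^ (m + 1) * (1 / ((i : ℝ) + 1) ^ (2 + m)) :=
        tsum_congr h_val
    _ = ((2 + m).factorial : ℝ) / 2 ^ (m + 1) * ∑' i : ℕ, 1 / ((i : ℝ) + 1) ^ (2 + m) :=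
        tsum_mul_left
    _ = ((2 + m).factorial : ℝ) / 2 ^ (2 + m - 1) * ∑' k : ℕ+, 1 / (k : ℝ) ^ (2 + m) := by
        rw [show 2 + m - 1 = m + 1 by omega]
        congr 1
        rw [← Equiv.pnatEquivNat.symm.tsum_eq (fun k : ℕ+ => 1 / (k : ℝ) ^ (2 + m))]
        refine tsum_congr fun i => ?_
        simp [Nat.succPNat]
end

section
/- The measure on the real line with density x ↦ 6x²/(π² sinh²(x)) with respect to Lebesgue measure restricted to (0,∞) is a probability measure; equivalently, ∫₀^∞ 6x²/(π² sinh²(x)) dx = 1. -/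
open MeasureTheory Real Set

noncomputable def g (n : ℕ) (x : ℝ) : ℝ := 24 / π ^ 2 * ((n : ℝ) * (x ^ 2 * Real.exp (-(2 * n * x))))

lemma hsum {x : ℝ} (hx : 0 < x) :
    HasSum (fun n : ℕ => g n x) (6 * x ^ 2 / (π ^ 2 * Real.sinh x ^ 2)) := by
  have hr : |Real.exp (-(2 * x))| < 1 := by
    rw [abs_of_pos (Real.exp_pos _)]
    exact Real.exp_lt_one_iff.mpr (by linarith)
  have h := (hasSum_coe_mul_geometric_of_norm_lt_one (r := Real.exp (-(2*x))) (by simpa using hr)).mul_left (24 / π ^ 2 * x ^ 2)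
  have key : 24 / π ^ 2 * x ^ 2 * (Real.exp (-(2*x)) / (1 - Real.exp (-(2*x))) ^ 2)
      = 6 * x ^ 2 / (π ^ 2 * Real.sinh x ^ 2) := by
    have hs : Real.sinh x = (Real.exp x - Real.exp (-x)) / 2 := by
      rw [Real.sinh_eq]
    have h1 : Real.sinh x ^ 2 = Real.exp (2*x) * (1 - Real.exp (-(2*x))) ^ 2 / 4 := by
      rw [hs]
      have e1 : Real.exp x - Real.exp (-x) = Real.exp x * (1 - Real.exp (-(2*x))) := by
        rw [mul_sub, mul_one, ← Real.exp_add]; ring_nf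
      rw [e1, div_pow, mul_pow, sq (Real.exp x), ← Real.exp_add]
      norm_num [two_mul]
    rw [h1]
    have h2 : (1 - Real.exp (-(2*x))) ≠ 0 := by
      have : Real.exp (-(2*x)) < 1 := Real.exp_lt_one_iff.mpr (by linarith)
      intro h
      nlinarith [Real.exp_pos (-(2*x))]
    have h3 : Real.exp (-(2*x)) = (Real.exp (2*x))⁻¹ := by
      rw [← Real.exp_neg]
    field_simp
    rw [mul_assoc, ← Real.exp_add, neg_add_cancel, Real.exp_zero]
    field_simp
    ring
  rw [← key]
  convert h using 2 with n
  · rfl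
  simp only [g]
  rw [← Real.exp_nat_mul]
  ring_nf

lemma hg_nonneg (n : ℕ) (x : ℝ) (hx : 0 < x) : 0 ≤ g n x := by
  unfold g; positivity

lemma hg_intOn (n : ℕ) (hn : 0 < n) : IntegrableOn (g n) (Ioi 0) := by
  have h2 : IntegrableOn (fun x : ℝ => x ^ (2:ℝ) * Real.exp (-(2*(n:ℝ)) * x ^ (1:ℝ))) (Ioi 0) :=
    integrableOn_rpow_mul_exp_neg_mul_rpow (by norm_num) zero_lt_one (by positivity)
  have h3 : IntegrableOn
      (fun x : ℝ => (24 / π ^ 2 * n) * (x ^ (2:ℝ) * Real.exp (-(2*(n:ℝ)) * x ^ (1:ℝ)))) (Ioi 0) :=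
    h2.const_mul _
  refine h3.congr_fun (fun x hx => ?_) measurableSet_Ioi
  simp only [g]
  rw [Real.rpow_one, neg_mul,
    show x ^ (2:ℝ) = x ^ (2:ℕ) by rw [← Real.rpow_natCast]; norm_num]
  ring

lemma hg_integral (n : ℕ) : ∫ x in Ioi (0:ℝ), g n x = 6 / π ^ 2 * (1 / (n:ℝ) ^ 2) := by
  rcases Nat.eq_zero_or_pos n with h | h
  · simp [h, g]
  have hn : (0:ℝ) < n := by exact_mod_cast h
  have hb : (0:ℝ) < 2 * n := by positivity
  have key := integral_rpow_mul_exp_neg_mul_Ioi (a := 3) (r := 2 * n) (by norm_num) hb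
  have hG : Real.Gamma 3 = 2 := by
    rw [(by norm_num : (3:ℝ) = (2:ℕ) + 1), Real.Gamma_nat_eq_factorial]
    norm_num
  have step : ∫ x in Ioi (0:ℝ), g n x
      = 24 / π ^ 2 * n * ∫ t in Ioi (0:ℝ), t ^ ((3:ℝ) - 1) * Real.exp (-(2 * n * t)) := by
    rw [← integral_const_mul]
    refine setIntegral_congr_fun measurableSet_Ioi (fun x hx => ?_)
    simp only [g]
    rw [show (3:ℝ) - 1 = ((2:ℕ):ℝ) by norm_num, Real.rpow_natCast]
    ring
  rw [step, key, hG,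
    show ((1:ℝ) / (2 * n)) ^ (3:ℝ) = ((1:ℝ) / (2*n)) ^ (3:ℕ) by
      rw [← Real.rpow_natCast]; norm_num]
  have hπ : π ≠ 0 := Real.pi_ne_zero
  field_simp
  ring

lemma hg_intOn' (n : ℕ) : IntegrableOn (g n) (Ioi 0) := by
  rcases Nat.eq_zero_or_pos n with h | h
  · have : g n = fun _ => (0:ℝ) := by funext x; simp [h, g]
    rw [this]; exact integrableOn_zero
  · exact hg_intOn n h

lemma hL : ∫⁻ x in Ioi (0:ℝ),
    ENNReal.ofReal (6 * x ^ 2 / (π ^ 2 * Real.sinh x ^ 2)) = 1 := by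
  have mg : ∀ n : ℕ, Measurable fun x : ℝ => ENNReal.ofReal (g n x) := by
    intro n
    apply Measurable.ennreal_ofReal
    unfold g
    fun_prop
  have step1 : ∫⁻ x in Ioi (0:ℝ), ENNReal.ofReal (6 * x ^ 2 / (π ^ 2 * Real.sinh x ^ 2))
      = ∫⁻ x in Ioi (0:ℝ), ∑' n : ℕ, ENNReal.ofReal (g n x) := by
    refine setLIntegral_congr_fun measurableSet_Ioi (fun x hx => ?_)
    rw [← (hsum hx).tsum_eq,
      ENNReal.ofReal_tsum_of_nonneg (fun n => hg_nonneg n x hx) (hsum hx).summable]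
  rw [step1, lintegral_tsum (fun n => (mg n).aemeasurable)]
  have step2 : ∀ n : ℕ, ∫⁻ x in Ioi (0:ℝ), ENNReal.ofReal (g n x)
      = ENNReal.ofReal (6 / π ^ 2 * (1 / (n:ℝ) ^ 2)) := by
    intro n
    rw [← ofReal_integral_eq_lintegral_ofReal (hg_intOn' n)
      ((ae_restrict_iff' measurableSet_Ioi).2 (ae_of_all _ fun x hx => hg_nonneg n x hx)),
      hg_integral n]
  simp_rw [step2]
  have hsummable : Summable (fun n : ℕ => 6 / π ^ 2 * (1 / (n:ℝ) ^ 2)) :=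
    (hasSum_zeta_two.mul_left _).summable
  rw [← ENNReal.ofReal_tsum_of_nonneg (fun n => by positivity) hsummable,
    (hasSum_zeta_two.mul_left (6 / π ^ 2)).tsum_eq]
  have hπ : π ≠ 0 := Real.pi_ne_zero
  rw [show 6 / π ^ 2 * (π ^ 2 / 6) = 1 by field_simp]
  exact ENNReal.ofReal_one

/-- The measure on ℝ with density `x ↦ 6x²/(π² sinh²(x))` with respect to Lebesgue
measure restricted to `(0,∞)` is a probability measure; equivalently,
`∫₀^∞ 6x²/(π² sinh²(x)) dx = 1`. -/
theorem density_is_probability_measure :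
    IsProbabilityMeasure
      ((volume.restrict (Set.Ioi (0 : ℝ))).withDensity
        fun x => ENNReal.ofReal (6 * x ^ 2 / (Real.pi ^ 2 * Real.sinh x ^ 2))) ∧
    ∫ x in Set.Ioi (0 : ℝ), 6 * x ^ 2 / (Real.pi ^ 2 * Real.sinh x ^ 2) = 1 := by
  have mf : Measurable fun x : ℝ => 6 * x ^ 2 / (π ^ 2 * Real.sinh x ^ 2) := by fun_prop
  constructor
  · constructor
    rw [withDensity_apply _ MeasurableSet.univ, Measure.restrict_univ]
    exact hL
  · have h0 : (0:ℝ → ℝ) ≤ᵐ[volume.restrict (Ioi 0)]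
        fun x => 6 * x ^ 2 / (π ^ 2 * Real.sinh x ^ 2) :=
      ae_of_all _ fun x => by positivity
    rw [integral_eq_lintegral_of_nonneg_ae h0 mf.aestronglyMeasurable, hL]
    simp
end

section
/- Let u, v be real numbers with u < 0 and 0 < v < 1, and set x₀ = uv/(u+v−1). Then 0 < x₀ < 1, the complex numbers p = i·√(−uv) and q = x₀ + i·√(x₀ − x₀²) lie in the upper half-plane, and the hyperbolic distance between p and q in the upper half-plane equals (1/2)·log((1−u)/(1−v)). (The points p and q are where the hyperbolic geodesic with ideal endpoints u and v crosses the sides of the ideal triangle with vertices 0, 1, ∞; so this computes the length of the intersection of that geodesic with the ideal triangle, Lemma 4 of the paper, case L₁₂.) -/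
open Complex

/-- Let `u < 0 < v < 1` and `x₀ = uv/(u+v−1)`. Then `0 < x₀ < 1`, the points
`p = i·√(−uv)` and `q = x₀ + i·√(x₀ − x₀²)` lie in the upper half-plane, and the
hyperbolic distance between them is `(1/2)·log((1−u)/(1−v))`.  (Length of the
intersection of the geodesic with ideal endpoints `u, v` with the ideal triangle
`{0,1,∞}`: Lemma 4, case `L₁₂`.) -/
theorem ideal_triangle_length_L12 (u v : ℝ) (hu : u < 0) (hv0 : 0 < v) (hv1 : v < 1) :
    0 < u * v / (u + v - 1) ∧ u * v / (u + v - 1) < 1 ∧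
    ∃ p q : UpperHalfPlane,
      (p : ℂ) = Complex.I * (Real.sqrt (-(u * v)) : ℝ) ∧
      (q : ℂ) = (u * v / (u + v - 1) : ℝ) +
        Complex.I * (Real.sqrt (u * v / (u + v - 1) - (u * v / (u + v - 1)) ^ 2) : ℝ) ∧
      dist p q = (1 / 2) * Real.log ((1 - u) / (1 - v)) := by
  have hs : u + v - 1 < 0 := by linarith
  have hsne : u + v - 1 ≠ 0 := ne_of_lt hs
  have huv : u * v < 0 := mul_neg_of_neg_of_pos hu hv0
  set x : ℝ := u * v / (u + v - 1) with hxdef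
  have hm : (0:ℝ) < 1 - u - v := by linarith
  have hmne : (1:ℝ) - u - v ≠ 0 := ne_of_gt hm
  have hx0 : 0 < x := div_pos_of_neg_of_neg huv hs
  have hx1 : x < 1 := by
    have h1 : x - 1 = ((1 - u) * (1 - v)) / (u + v - 1) := by
      rw [hxdef, div_sub_one hsne]; ring
    have h2 : ((1 - u) * (1 - v)) / (u + v - 1) < 0 :=
      div_neg_of_pos_of_neg (by nlinarith) hs
    linarith [h1 ▸ h2]
  set P : ℝ := Real.sqrt (-(u * v)) with hPdef
  set A : ℝ := Real.sqrt (1 - u) with hAdef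
  set B : ℝ := Real.sqrt (1 - v) with hBdef
  have hPpos : 0 < P := Real.sqrt_pos.2 (by linarith)
  have hApos : 0 < A := Real.sqrt_pos.2 (by linarith)
  have hBpos : 0 < B := Real.sqrt_pos.2 (by linarith)
  have hP2 : P ^ 2 = -(u * v) := Real.sq_sqrt (by linarith)
  have hA2 : A ^ 2 = 1 - u := Real.sq_sqrt (by linarith)
  have hB2 : B ^ 2 = 1 - v := Real.sq_sqrt (by linarith)
  -- x in terms of P and m
  have hxP : x = P ^ 2 / (1 - u - v) := by
    rw [hP2, hxdef]
    rw [div_eq_div_iff hsne hmne]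
    ring
  -- the imaginary part of q
  have hQval : Real.sqrt (x - x ^ 2) = P * A * B / (1 - u - v) := by
    have h1 : x - x ^ 2 = (P * A * B / (1 - u - v)) ^ 2 := by
      have h2 : (P * A * B / (1 - u - v)) ^ 2 = -(u * v) * ((1 - u) * (1 - v)) / (1 - u - v) ^ 2 := by
        rw [div_pow, mul_pow, mul_pow, hP2, hA2, hB2]; ring
      rw [h2, hxdef]
      field_simp
      ring
    rw [h1, Real.sqrt_sq (le_of_lt (div_pos (mul_pos (mul_pos hPpos hApos) hBpos) hm))]
  have hQpos : 0 < Real.sqrt (x - x ^ 2) := by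
    rw [hQval]; exact div_pos (mul_pos (mul_pos hPpos hApos) hBpos) hm
  refine ⟨hx0, hx1, ⟨Complex.I * (P : ℝ), by simp [hPpos]⟩,
    ⟨(x : ℝ) + Complex.I * (Real.sqrt (x - x ^ 2) : ℝ), by simp [hQpos]⟩, rfl, rfl, ?_⟩
  -- both sides are nonneg; compare via cosh
  have hR : (0:ℝ) < (1 - u) / (1 - v) := div_pos (by linarith) (by linarith)
  have hR1 : (1:ℝ) ≤ (1 - u) / (1 - v) := (one_le_div (by linarith)).2 (by linarith)
  have htnonneg : (0:ℝ) ≤ 1 / 2 * Real.log ((1 - u) / (1 - v)) := by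
    have := Real.log_nonneg hR1
    linarith
  refine Real.cosh_strictMonoOn.injOn (Set.mem_Ici.2 dist_nonneg) (Set.mem_Ici.2 htnonneg) ?_
  -- cosh of the distance
  rw [UpperHalfPlane.cosh_dist']
  have hre1 : (UpperHalfPlane.mk (Complex.I * (P : ℝ)) (by simp [hPpos]) : UpperHalfPlane).re = 0 := by
    simp [UpperHalfPlane.re]
  have hsqrtR : Real.sqrt ((1 - u) / (1 - v)) = A / B := by
    rw [Real.sqrt_div (by linarith : (0:ℝ) ≤ 1 - u)]
  have hcosht : Real.cosh (1 / 2 * Real.log ((1 - u) / (1 - v))) = (A / B + B / A) / 2 := by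
    have hlog : 1 / 2 * Real.log ((1 - u) / (1 - v)) = Real.log (A / B) := by
      rw [← hsqrtR, Real.log_sqrt hR.le]; ring
    rw [hlog, Real.cosh_eq, Real.exp_log (by positivity), ← Real.log_inv,
      Real.exp_log (by positivity)]
    rw [inv_div]
  rw [hcosht]
  simp only [UpperHalfPlane.re, UpperHalfPlane.im, UpperHalfPlane.coe, Complex.add_re,
    Complex.add_im, Complex.mul_re, Complex.mul_im, Complex.I_re, Complex.I_im,
    Complex.ofReal_re, Complex.ofReal_im]
  rw [hQval, hxP]
  have hABm : P ^ 2 + A ^ 2 * B ^ 2 = 1 - u - v := by rw [hP2, hA2, hB2]; ring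
  have hAB1 : A ^ 2 + B ^ 2 = (1 - u - v) + 1 := by rw [hA2, hB2]; ring
  generalize hmg : (1 : ℝ) - u - v = m at hABm hAB1 hm hmne ⊢
  field_simp
  linear_combination A*B*P^2*hABm - m*A*B*P^2*hAB1
end

section
/- Let u, v be real numbers with u < 0 and v > 1. Then the complex numbers p = i·√(−uv) and q = 1 + i·√((1−u)(v−1)) lie in the upper half-plane, and the hyperbolic distance between p and q in the upper half-plane equals (1/2)·log( v(1−u) / ((−u)(v−1)) ). (The points p and q are where the hyperbolic geodesic with ideal endpoints u and v crosses the two vertical sides x = 0 and x = 1 of the ideal triangle with vertices 0, 1, ∞; so this computes the length of the intersection of that geodesic with the ideal triangle, Lemma 4 of the paper, case L₁₃.) -/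
open Complex

/-- Let `u < 0` and `v > 1`. Then the points `p = i·√(−uv)` and
`q = 1 + i·√((1−u)(v−1))` lie in the upper half-plane, and the hyperbolic distance
between them is `(1/2)·log( v(1−u) / ((−u)(v−1)) )`.  (Length of the intersection of
the geodesic with ideal endpoints `u, v` with the ideal triangle `{0,1,∞}`:
Lemma 4, case `L₁₃`.) -/
theorem ideal_triangle_length_L13 (u v : ℝ) (hu : u < 0) (hv : 1 < v) :
    ∃ p q : UpperHalfPlane,
      (p : ℂ) = Complex.I * (Real.sqrt (-(u * v)) : ℝ) ∧
      (q : ℂ) = 1 + Complex.I * (Real.sqrt ((1 - u) * (v - 1)) : ℝ) ∧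
      dist p q = (1 / 2) * Real.log (v * (1 - u) / ((-u) * (v - 1))) := by
  set a : ℝ := Real.sqrt (-(u * v)) with ha_def
  set b : ℝ := Real.sqrt ((1 - u) * (v - 1)) with hb_def
  set c : ℝ := Real.sqrt (v * (1 - u)) with hc_def
  set d : ℝ := Real.sqrt ((-u) * (v - 1)) with hd_def
  have huv : (0:ℝ) < -(u * v) := by nlinarith
  have hb' : (0:ℝ) < (1 - u) * (v - 1) := by nlinarith
  have hc' : (0:ℝ) < v * (1 - u) := by nlinarith
  have hd' : (0:ℝ) < (-u) * (v - 1) := by nlinarith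
  have ha : 0 < a := Real.sqrt_pos.2 huv
  have hb : 0 < b := Real.sqrt_pos.2 hb'
  have hc : 0 < c := Real.sqrt_pos.2 hc'
  have hd : 0 < d := Real.sqrt_pos.2 hd'
  have ha2 : a ^ 2 = -(u * v) := Real.sq_sqrt huv.le
  have hb2 : b ^ 2 = (1 - u) * (v - 1) := Real.sq_sqrt hb'.le
  have hc2 : c ^ 2 = v * (1 - u) := Real.sq_sqrt hc'.le
  have hd2 : d ^ 2 = (-u) * (v - 1) := Real.sq_sqrt hd'.le
  have habcd : a * b = c * d := by
    rw [ha_def, hb_def, hc_def, hd_def, ← Real.sqrt_mul huv.le, ← Real.sqrt_mul hc'.le]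
    ring_nf
  set R : ℝ := v * (1 - u) / ((-u) * (v - 1)) with hR_def
  have hR : 0 < R := div_pos hc' hd'
  have hR1 : 1 ≤ R := by
    rw [hR_def, le_div_iff₀ hd']
    nlinarith
  have hsqR : Real.sqrt R = c / d := by
    rw [hR_def, Real.sqrt_div hc'.le]
  refine ⟨⟨Complex.I * (a : ℝ), by simp [ha]⟩, ⟨1 + Complex.I * (b : ℝ), by simp [hb]⟩,
    rfl, rfl, ?_⟩
  have him_p : (UpperHalfPlane.im ⟨Complex.I * (a : ℝ), by simp [ha]⟩ : ℝ) = a := by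
    simp [UpperHalfPlane.im]
  refine Real.cosh_strictMonoOn.injOn (Set.mem_Ici.2 dist_nonneg) (Set.mem_Ici.2 ?_) ?_
  · have : 0 ≤ Real.log R := Real.log_nonneg hR1
    linarith
  · rw [UpperHalfPlane.cosh_dist]
    have h1 : (1:ℝ) / 2 * Real.log R = Real.log (Real.sqrt R) := by
      rw [Real.log_sqrt hR.le]; ring
    rw [h1, Real.cosh_eq, Real.exp_log (by rw [hsqR]; positivity),
      Real.exp_neg, Real.exp_log (by rw [hsqR]; positivity), hsqR]
    have him1 : (UpperHalfPlane.im ⟨Complex.I * (a : ℝ), by simp [ha]⟩ : ℝ) = a := by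
      simp [UpperHalfPlane.im]
    have him2 : (UpperHalfPlane.im ⟨1 + Complex.I * (b : ℝ), by simp [hb]⟩ : ℝ) = b := by
      simp [UpperHalfPlane.im]
    rw [him1, him2, Complex.dist_eq, ← Complex.normSq_eq_norm_sq]
    have hns : Complex.normSq ((Complex.I * (a:ℝ)) - (1 + Complex.I * (b:ℝ)))
        = 1 + (a - b) ^ 2 := by
      simp [Complex.normSq_apply]
      ring
    show (1:ℝ) + Complex.normSq (Complex.I * (a:ℝ) - (1 + Complex.I * (b:ℝ)))
        / (2 * a * b) = (c / d + (c / d)⁻¹) / 2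
    rw [hns]
    have key : 1 + a ^ 2 + b ^ 2 = c ^ 2 + d ^ 2 := by
      rw [ha2, hb2, hc2, hd2]; ring
    have h2 : (c / d + (c / d)⁻¹) / 2 = (c ^ 2 + d ^ 2) / (2 * (c * d)) := by
      field_simp
    rw [h2, ← habcd, ← key]
    field_simp
    ring
end

section
/- Let L : ℝ² → ℝ be defined by L(u,v) = (1/2)·log((1−u)/(1−v)), and let μ₁₂ be the measure on ℝ² obtained from Lebesgue measure restricted to the region (−∞,0) × (0,1) by taking density (u,v) ↦ 1/(u−v)². Then the pushforward of μ₁₂ under L equals the measure on ℝ obtained from Lebesgue measure restricted to (0,∞) by taking density x ↦ x/sinh²(x). (This is the computation of the pushforward of the Liouville measure by the ideal-triangle length function on the region I₁ × I₂, the key step of Theorem 6.) -/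
open MeasureTheory Real Set ENNReal

/-- Pushing forward a `withDensity` measure whose density factors through the map. -/
lemma aux_map_withDensity_comp {α β : Type*} [MeasurableSpace α] [MeasurableSpace β]
    (μ : Measure α) {f : α → β} (hf : Measurable f) {g : β → ℝ≥0∞} (hg : Measurable g) :
    Measure.map f (μ.withDensity fun x => g (f x)) = (Measure.map f μ).withDensity g := by
  ext A hA
  rw [Measure.map_apply hf hA, withDensity_apply _ (hf hA), withDensity_apply _ hA,
    setLIntegral_map hA hg hf]

/-- One-dimensional change of variables, measure version. -/
lemma aux_map1D {s : Set ℝ} {f f' : ℝ → ℝ} (hs : MeasurableSet s)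
    (hd : ∀ x ∈ s, HasDerivWithinAt f (f' x) s x) (hinj : Set.InjOn f s) (hfm : Measurable f) :
    Measure.map f ((volume.restrict s).withDensity fun x => ENNReal.ofReal |f' x|)
      = volume.restrict (f '' s) := by
  have := map_withDensity_abs_det_fderiv_eq_addHaar volume hs.nullMeasurableSet
    (fun x hx => (hd x hx).hasFDerivWithinAt) hinj
  simpa [ContinuousLinearMap.det_toSpanSingleton] using this

lemma aux_image_phi : (fun s : ℝ => 1 - exp s) '' Ioi 0 = Iio 0 := by
  ext x
  simp only [mem_image, mem_Ioi, mem_Iio]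
  constructor
  · rintro ⟨s, hs, rfl⟩
    have : (1:ℝ) < exp s := by rw [← Real.exp_zero]; exact Real.exp_lt_exp.2 hs
    linarith
  · intro hx
    refine ⟨Real.log (1 - x), Real.log_pos (by linarith), ?_⟩
    rw [Real.exp_log (by linarith)]; ring

lemma aux_image_psi : (fun t : ℝ => 1 - exp (-t)) '' Ioi 0 = Ioo 0 1 := by
  ext x
  simp only [mem_image, mem_Ioi, mem_Ioo]
  constructor
  · rintro ⟨t, ht, rfl⟩
    have h1 : exp (-t) < 1 := by
      rw [← Real.exp_zero]; exact Real.exp_lt_exp.2 (by linarith)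
    have h2 : (0:ℝ) < exp (-t) := Real.exp_pos _
    constructor <;> linarith
  · rintro ⟨hx0, hx1⟩
    have hl : Real.log (1 - x) < 0 := Real.log_neg (by linarith) (by linarith)
    refine ⟨-Real.log (1 - x), by linarith, ?_⟩
    rw [neg_neg, Real.exp_log (by linarith)]; ring

lemma aux_mapA :
    Measure.map (fun s : ℝ => 1 - exp s)
      ((volume.restrict (Ioi 0)).withDensity fun s => ENNReal.ofReal (exp s))
      = volume.restrict (Iio 0) := by
  have hd : ∀ x ∈ Ioi (0:ℝ), HasDerivWithinAt (fun s : ℝ => 1 - exp s) (-exp x) (Ioi 0) x :=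
    fun x _ => ((Real.hasDerivAt_exp x).const_sub 1).hasDerivWithinAt
  have hinj : Set.InjOn (fun s : ℝ => 1 - exp s) (Ioi 0) := by
    intro a _ b _ h
    have : exp a = exp b := by simpa using h
    exact Real.exp_injective this
  have := aux_map1D measurableSet_Ioi hd hinj (by measurability)
  rw [aux_image_phi] at this
  simpa [abs_of_pos (Real.exp_pos _)] using this

lemma aux_mapB :
    Measure.map (fun t : ℝ => 1 - exp (-t))
      ((volume.restrict (Ioi 0)).withDensity fun t => ENNReal.ofReal (exp (-t)))
      = volume.restrict (Ioo 0 1) := by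
  have hd : ∀ x ∈ Ioi (0:ℝ),
      HasDerivWithinAt (fun t : ℝ => 1 - exp (-t)) (exp (-x)) (Ioi 0) x := by
    intro x _
    have h1 : HasDerivAt (fun t : ℝ => exp (-t)) (exp (-x) * (-1)) x :=
      (hasDerivAt_neg x).exp
    have h2 := h1.const_sub 1
    simpa using h2.hasDerivWithinAt
  have hinj : Set.InjOn (fun t : ℝ => 1 - exp (-t)) (Ioi 0) := by
    intro a _ b _ h
    have : exp (-a) = exp (-b) := by simpa using h
    have := Real.exp_injective this
    linarith
  have := aux_map1D measurableSet_Ioi hd hinj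
    (measurable_const.sub (measurable_id.neg.exp))
  rw [aux_image_psi] at this
  simpa [abs_of_pos (Real.exp_pos _)] using this

lemma aux_prod_withDensity {μ ν : Measure ℝ} [SigmaFinite μ] [SigmaFinite ν]
    {f g : ℝ → ℝ≥0∞} (hf : Measurable f) (hg : Measurable g)
    [SigmaFinite (μ.withDensity f)] [SigmaFinite (ν.withDensity g)] :
    (μ.withDensity f).prod (ν.withDensity g)
      = (μ.prod ν).withDensity fun p => f p.1 * g p.2 := by
  refine Measure.prod_eq fun s t hs ht => ?_
  rw [withDensity_apply _ (hs.prod ht), ← Measure.prod_restrict,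
    lintegral_prod_mul hf.aemeasurable hg.aemeasurable,
    withDensity_apply _ hs, withDensity_apply _ ht]

lemma aux_mapT :
    Measure.map (fun p : ℝ × ℝ => (1 - exp p.1, 1 - exp (-p.2)))
      (((volume : Measure (ℝ × ℝ)).restrict (Ioi 0 ×ˢ Ioi 0)).withDensity
        fun p => ENNReal.ofReal (exp p.1) * ENNReal.ofReal (exp (-p.2)))
      = (volume : Measure (ℝ × ℝ)).restrict (Iio 0 ×ˢ Ioo 0 1) := by
  have hφ : Measurable (fun s : ℝ => 1 - exp s) := measurable_const.sub measurable_exp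
  have hψ : Measurable (fun t : ℝ => 1 - exp (-t)) :=
    measurable_const.sub measurable_id.neg.exp
  have hT : (fun p : ℝ × ℝ => (1 - exp p.1, 1 - exp (-p.2)))
      = Prod.map (fun s : ℝ => 1 - exp s) (fun t : ℝ => 1 - exp (-t)) := rfl
  rw [Measure.volume_eq_prod, ← Measure.prod_restrict,
    ← aux_prod_withDensity (f := fun s => ENNReal.ofReal (exp s))
      (g := fun t => ENNReal.ofReal (exp (-t)))
      measurable_exp.ennreal_ofReal measurable_id.neg.exp.ennreal_ofReal, hT,
    ← Measure.map_prod_map _ _ hφ hψ, aux_mapA, aux_mapB, Measure.prod_restrict,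
    ← Measure.volume_eq_prod]

lemma aux_mapP :
    Measure.map (fun p : ℝ × ℝ => (p.1 + p.2) / 2)
      ((volume : Measure (ℝ × ℝ)).restrict (Ioi 0 ×ˢ Ioi 0))
      = (volume.restrict (Ioi 0)).withDensity fun x => ENNReal.ofReal (4 * x) := by
  have hP : Measurable (fun p : ℝ × ℝ => (p.1 + p.2) / 2) :=
    (measurable_fst.add measurable_snd).div_const 2
  ext A hA
  rw [Measure.map_apply hP hA, Measure.restrict_apply (hP hA), Measure.volume_eq_prod,
    Measure.prod_apply ((hP hA).inter ((measurableSet_Ioi).prod measurableSet_Ioi))]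
  have fiber : ∀ s : ℝ, volume (Prod.mk s ⁻¹'
        ((fun p : ℝ × ℝ => (p.1 + p.2) / 2) ⁻¹' A ∩ Ioi 0 ×ˢ Ioi 0))
      = (Ioi (0:ℝ)).indicator (fun s => ENNReal.ofReal 2 * volume (A ∩ Ioi (s / 2))) s := by
    intro s
    by_cases hs : s ∈ Ioi (0:ℝ)
    · rw [indicator_of_mem hs]
      have hset : Prod.mk s ⁻¹' ((fun p : ℝ × ℝ => (p.1 + p.2) / 2) ⁻¹' A ∩ Ioi 0 ×ˢ Ioi 0)
          = (fun t => (s + t) / 2) ⁻¹' (A ∩ Ioi (s / 2)) := by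
        ext t
        simp only [mem_preimage, mem_inter_iff, mem_prod, mem_Ioi, mem_Ioi] at *
        constructor
        · rintro ⟨h1, _, h2⟩; exact ⟨h1, by linarith⟩
        · rintro ⟨h1, h2⟩; exact ⟨h1, hs, by linarith⟩
      rw [hset]
      have hcomp : (fun t : ℝ => (s + t) / 2) = (fun x : ℝ => (2:ℝ)⁻¹ * x) ∘ (fun t => s + t) := by
        funext t; simp [Function.comp]; ring
      have hmap : Measure.map (fun t : ℝ => (s + t) / 2) volume
          = ENNReal.ofReal 2 • volume := by
        rw [hcomp, ← Measure.map_map (measurable_const_mul _) (measurable_const_add _),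
          Measure.IsAddLeftInvariant.map_add_left_eq_self (μ := (volume : Measure ℝ)) s,
          Real.map_volume_mul_left (by norm_num : (2:ℝ)⁻¹ ≠ 0)]
        norm_num
      have := Measure.map_apply (μ := (volume : Measure ℝ))
        ((measurable_const_add s).div_const 2) (hA.inter (measurableSet_Ioi (a := s / 2)))
      rw [hmap] at this
      rw [← this]
      rfl
    · rw [indicator_of_notMem hs]
      have : Prod.mk s ⁻¹' ((fun p : ℝ × ℝ => (p.1 + p.2) / 2) ⁻¹' A ∩ Ioi 0 ×ˢ Ioi 0) = ∅ := by
        ext t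
        simp only [mem_preimage, mem_inter_iff, mem_prod, mem_Ioi, mem_empty_iff_false,
          iff_false, not_and]
        intro _ h
        exact absurd h hs
      rw [this, measure_empty]
  simp_rw [fiber]
  rw [lintegral_indicator measurableSet_Ioi]
  set Q : Set (ℝ × ℝ) := {p | p.2 ∈ A ∧ p.1 < 2 * p.2} with hQdef
  have hQ : MeasurableSet Q :=
    (measurable_snd hA).inter (measurableSet_lt measurable_fst (measurable_snd.const_mul 2))
  have key : ∀ s x : ℝ, (A ∩ Ioi (s / 2)).indicator (fun _ => (1:ℝ≥0∞)) x
      = Q.indicator (fun _ => (1:ℝ≥0∞)) (s, x) := by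
    intro s x
    have hmem : x ∈ A ∩ Ioi (s / 2) ↔ (s, x) ∈ Q := by
      simp only [hQdef, mem_inter_iff, mem_Ioi, mem_setOf_eq]
      exact and_congr_right fun _ => ⟨fun h => by linarith, fun h => by linarith⟩
    by_cases h : (s, x) ∈ Q
    · rw [indicator_of_mem h, indicator_of_mem (hmem.2 h)]
    · rw [indicator_of_notMem h, indicator_of_notMem (fun hc => h (hmem.1 hc))]
  have step1 : ∀ s : ℝ, volume (A ∩ Ioi (s / 2))
      = ∫⁻ x, Q.indicator (fun _ => (1:ℝ≥0∞)) (s, x) ∂volume := by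
    intro s
    rw [← lintegral_indicator_one (hA.inter measurableSet_Ioi)]
    exact lintegral_congr fun x => key s x
  simp_rw [step1]
  rw [lintegral_const_mul' _ _ ENNReal.ofReal_ne_top]
  have swap : ∫⁻ s in Ioi (0:ℝ), (∫⁻ x, Q.indicator (fun _ => (1:ℝ≥0∞)) (s, x) ∂volume)
        ∂volume
      = ∫⁻ x, (∫⁻ s in Ioi (0:ℝ), Q.indicator (fun _ => (1:ℝ≥0∞)) (s, x) ∂volume) ∂volume :=
    lintegral_lintegral_swap ((measurable_one.indicator hQ).aemeasurable)
  rw [swap]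
  have inner : ∀ x : ℝ, (∫⁻ s in Ioi (0:ℝ), Q.indicator (fun _ => (1:ℝ≥0∞)) (s, x) ∂volume)
      = A.indicator (fun x => ENNReal.ofReal (2 * x)) x := by
    intro x
    have : ∀ s : ℝ, Q.indicator (fun _ => (1:ℝ≥0∞)) (s, x)
        = A.indicator (fun _ => (1:ℝ≥0∞)) x * (Iio (2 * x)).indicator (fun _ => (1:ℝ≥0∞)) s := by
      intro s
      by_cases h1 : x ∈ A <;> by_cases h2 : s < 2 * x <;>
        simp [hQdef, indicator, h1, h2, mem_Iio]
    simp_rw [this]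
    rw [lintegral_const_mul' _ _ (by by_cases h : x ∈ A <;> simp [h])]
    rw [lintegral_indicator measurableSet_Iio, setLIntegral_one,
      Measure.restrict_apply measurableSet_Iio, Set.Iio_inter_Ioi, Real.volume_Ioo]
    by_cases h1 : x ∈ A <;> simp [h1]
  simp_rw [inner]
  rw [lintegral_indicator hA, withDensity_apply _ hA, Measure.restrict_restrict hA]
  rw [← lintegral_const_mul' _ _ ENNReal.ofReal_ne_top]
  have e1 : ∀ x : ℝ, ENNReal.ofReal 2 * ENNReal.ofReal (2 * x) = ENNReal.ofReal (4 * x) := by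
    intro x
    rw [← ENNReal.ofReal_mul (by norm_num : (0:ℝ) ≤ 2)]
    ring_nf
  simp_rw [e1]
  rw [← lintegral_indicator hA, ← lintegral_indicator (hA.inter measurableSet_Ioi)]
  apply lintegral_congr
  intro x
  by_cases h1 : x ∈ A <;> by_cases h2 : (0:ℝ) < x <;>
    simp [indicator, h1, h2, mem_Ioi, ENNReal.ofReal_eq_zero]
  · linarith

lemma aux_density_real (s t : ℝ) :
    exp s * exp (-t) * (1 / ((1 - exp s) - (1 - exp (-t))) ^ 2)
      = 1 / (4 * sinh ((s + t) / 2) ^ 2) := by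
  have e1 : exp ((s - t) / 2) * exp ((s + t) / 2) = exp s := by
    rw [← Real.exp_add]; congr 1; ring
  have e2 : exp ((s - t) / 2) * exp (-((s + t) / 2)) = exp (-t) := by
    rw [← Real.exp_add]; congr 1; ring
  have key : (1 - exp s) - (1 - exp (-t))
      = -(2 * exp ((s - t) / 2) * sinh ((s + t) / 2)) := by
    rw [Real.sinh_eq]
    linear_combination e1 - e2
  have ha : exp ((s - t) / 2) ^ 2 = exp s * exp (-t) := by
    rw [sq, ← Real.exp_add, ← Real.exp_add]; congr 1; ring
  rw [key, neg_sq]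
  rcases eq_or_ne (sinh ((s + t) / 2)) 0 with hz | hz
  · simp [hz]
  · have hea := Real.exp_ne_zero ((s - t) / 2)
    field_simp
    linear_combination (-(4:ℝ)) * ha

lemma aux_LT :
    (fun p : ℝ × ℝ => (1 / 2) * Real.log ((1 - p.1) / (1 - p.2)))
        ∘ (fun p : ℝ × ℝ => (1 - exp p.1, 1 - exp (-p.2)))
      = fun p : ℝ × ℝ => (p.1 + p.2) / 2 := by
  funext p
  have e : (1 - (1 - exp p.1)) / (1 - (1 - exp (-p.2))) = exp (p.1 + p.2) := by
    rw [_root_.sub_sub_cancel, _root_.sub_sub_cancel, ← Real.exp_sub]; congr 1; ring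
  simp only [Function.comp_apply]
  rw [e, Real.log_exp]
  ring

/-- The pushforward of the Liouville measure `du dv/(u−v)²` on `(−∞,0) × (0,1)` under
the length function `L(u,v) = (1/2)·log((1−u)/(1−v))` is the measure `x/sinh²(x) dx`
on `(0,∞)`. -/
theorem pushforward_liouville_L12 :
    Measure.map (fun p : ℝ × ℝ => (1 / 2) * Real.log ((1 - p.1) / (1 - p.2)))
      (((volume : Measure (ℝ × ℝ)).restrict (Set.Iio 0 ×ˢ Set.Ioo 0 1)).withDensity
        fun p => ENNReal.ofReal (1 / (p.1 - p.2) ^ 2))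
    = (volume.restrict (Set.Ioi (0 : ℝ))).withDensity
        fun x => ENNReal.ofReal (x / Real.sinh x ^ 2) := by
  have hL : Measurable (fun p : ℝ × ℝ => (1 / 2) * Real.log ((1 - p.1) / (1 - p.2))) :=
    (((measurable_const.sub measurable_fst).div
      (measurable_const.sub measurable_snd)).log).const_mul _
  have hT : Measurable (fun p : ℝ × ℝ => (1 - exp p.1, 1 - exp (-p.2))) :=
    (measurable_const.sub measurable_fst.exp).prodMk
      (measurable_const.sub measurable_snd.neg.exp)
  have hP : Measurable (fun p : ℝ × ℝ => (p.1 + p.2) / 2) :=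
    (measurable_fst.add measurable_snd).div_const 2
  have hdens : Measurable (fun p : ℝ × ℝ => ENNReal.ofReal (1 / (p.1 - p.2) ^ 2)) :=
    (measurable_const.div ((measurable_fst.sub measurable_snd).pow_const 2)).ennreal_ofReal
  have hW : Measurable (fun p : ℝ × ℝ => ENNReal.ofReal (exp p.1) * ENNReal.ofReal (exp (-p.2))) :=
    measurable_fst.exp.ennreal_ofReal.mul measurable_snd.neg.exp.ennreal_ofReal
  have hh : Measurable (fun x : ℝ => ENNReal.ofReal (1 / (4 * sinh x ^ 2))) :=
    (measurable_const.div ((Real.continuous_sinh.measurable.pow_const 2).const_mul 4)).ennreal_ofReal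
  have hdT : Measurable (fun x : ℝ × ℝ =>
      ENNReal.ofReal (1 / ((1 - exp x.1) - (1 - exp (-x.2))) ^ 2)) :=
    (measurable_const.div (((measurable_const.sub measurable_fst.exp).sub
      (measurable_const.sub measurable_snd.neg.exp)).pow_const 2)).ennreal_ofReal
  -- step 1: the Liouville measure as a pushforward from the quadrant
  rw [← aux_mapT, ← aux_map_withDensity_comp _ hT hdens]
  dsimp only
  rw [← withDensity_mul _ hW hdT]
  have hdensity : (fun p : ℝ × ℝ => ENNReal.ofReal (exp p.1) * ENNReal.ofReal (exp (-p.2)))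
        * (fun p : ℝ × ℝ => ENNReal.ofReal (1 / ((1 - exp p.1) - (1 - exp (-p.2))) ^ 2))
      = fun p : ℝ × ℝ => ENNReal.ofReal (1 / (4 * sinh ((p.1 + p.2) / 2) ^ 2)) := by
    funext p
    simp only [Pi.mul_apply]
    rw [← ENNReal.ofReal_mul (Real.exp_nonneg _),
      ← ENNReal.ofReal_mul (mul_nonneg (Real.exp_nonneg _) (Real.exp_nonneg _))]
    exact congrArg ENNReal.ofReal (aux_density_real p.1 p.2)
  rw [hdensity, Measure.map_map hL hT, aux_LT,
    aux_map_withDensity_comp (g := fun x : ℝ => ENNReal.ofReal (1 / (4 * sinh x ^ 2))) _ hP hh,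
    aux_mapP, ← withDensity_mul _ (by exact (measurable_const_mul (4:ℝ)).ennreal_ofReal : Measurable fun x : ℝ => ENNReal.ofReal (4 * x)) hh]
  refine withDensity_congr_ae ?_
  filter_upwards [ae_restrict_mem measurableSet_Ioi] with x hx
  simp only [Pi.mul_apply]
  rw [← ENNReal.ofReal_mul (by simp only [mem_Ioi] at hx; linarith)]
  congr 1
  rw [mul_one_div, mul_div_mul_left _ _ (by norm_num : (4:ℝ) ≠ 0)]
end

section
/- Let L : ℝ² → ℝ be defined by L(u,v) = (1/2)·log( v(1−u) / ((−u)(v−1)) ), and let μ₁₃ be the measure on ℝ² obtained from Lebesgue measure restricted to the region (−∞,0) × (1,∞) by taking density (u,v) ↦ 1/(u−v)². Then the pushforward of μ₁₃ under L equals the measure on ℝ obtained from Lebesgue measure restricted to (0,∞) by taking density x ↦ x/sinh²(x). (This is the pushforward of the Liouville measure by the ideal-triangle length function on the region I₁ × I₃; it coincides with the pushforward from any of the six regions, Theorem 6.) -/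
open MeasureTheory Real Set
open scoped ENNReal

noncomputable section LiouvilleAux

namespace Liouville13

def D : Set (ℝ × ℝ) := {p | 0 < p.1 ∧ |p.2| < p.1}

lemma measurableSet_D : MeasurableSet D := by
  have : IsOpen D :=
    (isOpen_lt continuous_const continuous_fst).inter
      (isOpen_lt continuous_snd.abs continuous_fst)
  exact this.measurableSet

def Φ : ℝ × ℝ → ℝ × ℝ :=
  fun p => (-(Real.exp (p.1 + p.2) - 1)⁻¹, 1 + (Real.exp (p.1 - p.2) - 1)⁻¹)

lemma measurable_Φ : Measurable Φ := by
  unfold Φ; fun_prop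

def Φ' : ℝ × ℝ → ℝ × ℝ →L[ℝ] ℝ × ℝ := fun p =>
  LinearMap.toContinuousLinearMap (Matrix.toLin (Module.Basis.finTwoProd ℝ) (Module.Basis.finTwoProd ℝ)
    !![exp (p.1 + p.2) / (exp (p.1 + p.2) - 1) ^ 2,
       exp (p.1 + p.2) / (exp (p.1 + p.2) - 1) ^ 2;
       -(exp (p.1 - p.2) / (exp (p.1 - p.2) - 1) ^ 2),
       exp (p.1 - p.2) / (exp (p.1 - p.2) - 1) ^ 2])

lemma det_Φ' (p : ℝ × ℝ) :
    (Φ' p).det = 2 * (exp (p.1 + p.2) / (exp (p.1 + p.2) - 1) ^ 2) *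
      (exp (p.1 - p.2) / (exp (p.1 - p.2) - 1) ^ 2) := by
  simp only [Φ', LinearMap.det_toContinuousLinearMap, LinearMap.det_toLin,
    Matrix.det_fin_two_of]
  ring

lemma hasFDerivAt_Φ {p : ℝ × ℝ} (h1 : exp (p.1 + p.2) ≠ 1) (h2 : exp (p.1 - p.2) ≠ 1) :
    HasFDerivAt Φ (Φ' p) p := by
  have e1 : HasFDerivAt (fun q : ℝ × ℝ => Real.exp (q.1 + q.2) - 1)
      (Real.exp (p.1 + p.2) •
        (ContinuousLinearMap.fst ℝ ℝ ℝ + ContinuousLinearMap.snd ℝ ℝ ℝ)) p :=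
    ((Real.hasDerivAt_exp _).comp_hasFDerivAt p (hasFDerivAt_fst.add hasFDerivAt_snd)).sub_const 1
  have e2 : HasFDerivAt (fun q : ℝ × ℝ => (Real.exp (q.1 + q.2) - 1)⁻¹)
      ((-((Real.exp (p.1 + p.2) - 1) ^ 2)⁻¹) • (Real.exp (p.1 + p.2) •
        (ContinuousLinearMap.fst ℝ ℝ ℝ + ContinuousLinearMap.snd ℝ ℝ ℝ))) p :=
    (hasDerivAt_inv (sub_ne_zero.2 h1)).comp_hasFDerivAt p e1
  have e3 : HasFDerivAt (fun q : ℝ × ℝ => Real.exp (q.1 - q.2) - 1)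
      (Real.exp (p.1 - p.2) •
        (ContinuousLinearMap.fst ℝ ℝ ℝ - ContinuousLinearMap.snd ℝ ℝ ℝ)) p :=
    ((Real.hasDerivAt_exp _).comp_hasFDerivAt p (hasFDerivAt_fst.sub hasFDerivAt_snd)).sub_const 1
  have e4 : HasFDerivAt (fun q : ℝ × ℝ => (Real.exp (q.1 - q.2) - 1)⁻¹)
      ((-((Real.exp (p.1 - p.2) - 1) ^ 2)⁻¹) • (Real.exp (p.1 - p.2) •
        (ContinuousLinearMap.fst ℝ ℝ ℝ - ContinuousLinearMap.snd ℝ ℝ ℝ))) p :=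
    (hasDerivAt_inv (sub_ne_zero.2 h2)).comp_hasFDerivAt p e3
  have h := (e2.neg).prodMk (e4.const_add 1)
  have heq : (-((-((Real.exp (p.1 + p.2) - 1) ^ 2)⁻¹) • (Real.exp (p.1 + p.2) •
        (ContinuousLinearMap.fst ℝ ℝ ℝ + ContinuousLinearMap.snd ℝ ℝ ℝ)))).prod
      ((-((Real.exp (p.1 - p.2) - 1) ^ 2)⁻¹) • (Real.exp (p.1 - p.2) •
        (ContinuousLinearMap.fst ℝ ℝ ℝ - ContinuousLinearMap.snd ℝ ℝ ℝ))) = Φ' p := by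
    unfold Φ'
    rw [Matrix.toLin_finTwoProd_toContinuousLinearMap]
    apply ContinuousLinearMap.ext
    intro q
    simp only [ContinuousLinearMap.prod_apply, ContinuousLinearMap.neg_apply,
      ContinuousLinearMap.smul_apply, ContinuousLinearMap.add_apply,
      ContinuousLinearMap.sub_apply, ContinuousLinearMap.coe_fst',
      ContinuousLinearMap.coe_snd', smul_eq_mul, Prod.mk.injEq]
    constructor <;> · rw [div_eq_mul_inv]; ring
  exact heq ▸ h


lemma injOn_Φ : Set.InjOn Φ D := by
  rintro ⟨x, t⟩ _ ⟨x', t'⟩ _ h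
  simp only [Φ, Prod.mk.injEq] at h
  obtain ⟨h1, h2⟩ := h
  have e1 : x + t = x' + t' := by
    have h1' := inv_injective (neg_injective h1)
    exact Real.exp_injective (by linarith)
  have e2 : x - t = x' - t' := by
    have h2' : (Real.exp (x - t) - 1)⁻¹ = (Real.exp (x' - t') - 1)⁻¹ := by linarith
    have := inv_injective h2'
    exact Real.exp_injective (by linarith)
  exact Prod.ext (by dsimp; linarith) (by dsimp; linarith)

lemma one_lt_exp_of_pos {y : ℝ} (hy : 0 < y) : 1 < Real.exp y := by
  have := Real.exp_lt_exp.2 hy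
  rwa [Real.exp_zero] at this

lemma image_Φ : Φ '' D = Set.Iio (0 : ℝ) ×ˢ Set.Ioi (1 : ℝ) := by
  apply Set.Subset.antisymm
  · rintro z ⟨⟨x, t⟩, ⟨hx, ht⟩, rfl⟩
    obtain ⟨ht1, ht2⟩ := abs_lt.1 ht
    have ha : (1:ℝ) < Real.exp (x + t) := one_lt_exp_of_pos (by linarith)
    have hb : (1:ℝ) < Real.exp (x - t) := one_lt_exp_of_pos (by linarith)
    constructor
    · show -(Real.exp (x + t) - 1)⁻¹ < 0
      rw [neg_lt_zero, inv_pos]; linarith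
    · show (1:ℝ) < 1 + (Real.exp (x - t) - 1)⁻¹
      have : (0:ℝ) < (Real.exp (x - t) - 1)⁻¹ := inv_pos.2 (by linarith)
      linarith
  · rintro ⟨u, v⟩ ⟨hu, hv⟩
    simp only [Set.mem_Iio] at hu
    simp only [Set.mem_Ioi] at hv
    set a := Real.log (1 - u⁻¹) with ha_def
    set b := Real.log (1 + (v - 1)⁻¹) with hb_def
    have hui : u⁻¹ < 0 := inv_lt_zero.2 hu
    have hvi : (0:ℝ) < (v - 1)⁻¹ := inv_pos.2 (by linarith)
    have ha : 0 < a := Real.log_pos (by linarith)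
    have hb : 0 < b := Real.log_pos (by linarith)
    refine ⟨((a + b) / 2, (a - b) / 2), ⟨?_, ?_⟩, ?_⟩
    · show 0 < (a + b) / 2
      linarith
    · show |(a - b) / 2| < (a + b) / 2
      rw [abs_lt]; constructor <;> linarith
    · have e1 : (a + b) / 2 + (a - b) / 2 = a := by ring
      have e2 : (a + b) / 2 - (a - b) / 2 = b := by ring
      show Φ ((a + b) / 2, (a - b) / 2) = (u, v)
      simp only [Φ, e1, e2]
      rw [Real.exp_log (by linarith : (0:ℝ) < 1 - u⁻¹),
        Real.exp_log (by linarith : (0:ℝ) < 1 + (v - 1)⁻¹), Prod.mk.injEq]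
      constructor
      · have : (1 : ℝ) - u⁻¹ - 1 = -u⁻¹ := by ring
        rw [this, inv_neg, neg_neg, inv_inv]
      · have : (1 : ℝ) + (v - 1)⁻¹ - 1 = (v - 1)⁻¹ := by ring
        rw [this, inv_inv]; ring

lemma sinh_sq_eq (x : ℝ) :
    Real.sinh x ^ 2 = (Real.exp x ^ 2 - 1) ^ 2 / (4 * Real.exp x ^ 2) := by
  have hx : Real.exp x ≠ 0 := (Real.exp_pos x).ne'
  rw [Real.sinh_eq, Real.exp_neg]
  field_simp
  ring

lemma density_eq {p : ℝ × ℝ} (hp : p ∈ D) :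
    ENNReal.ofReal |(Φ' p).det| * ENNReal.ofReal (1 / ((Φ p).1 - (Φ p).2) ^ 2)
      = ENNReal.ofReal (1 / (2 * Real.sinh p.1 ^ 2)) := by
  obtain ⟨x, t⟩ := p
  obtain ⟨hx, ht⟩ := hp
  obtain ⟨ht1, ht2⟩ := abs_lt.1 ht
  dsimp only at hx ht1 ht2
  have hdet := det_Φ' (x, t)
  dsimp only at hdet
  simp only [Φ]
  rw [hdet]
  set E := Real.exp (x + t) with hE_def
  set F := Real.exp (x - t) with hF_def
  have hE : 1 < E := one_lt_exp_of_pos (by linarith)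
  have hF : 1 < F := one_lt_exp_of_pos (by linarith)
  have hEF : E * F = Real.exp x ^ 2 := by
    rw [hE_def, hF_def, ← Real.exp_add, show x + t + (x - t) = x + x by ring,
      Real.exp_add]
    ring
  have hE1 : E - 1 ≠ 0 := by intro h; simp only [sub_eq_zero] at h; exact absurd h.symm hE.ne
  have hF1 : F - 1 ≠ 0 := by intro h; simp only [sub_eq_zero] at h; exact absurd h.symm hF.ne
  have hEF1 : E * F - 1 ≠ 0 := by nlinarith
  have hpos : (0:ℝ) < 2 * (E / (E - 1) ^ 2) * (F / (F - 1) ^ 2) := by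
    apply mul_pos (mul_pos two_pos _) _
    · exact div_pos (by linarith) (by positivity)
    · exact div_pos (by linarith) (by positivity)
  rw [abs_of_pos hpos, ← ENNReal.ofReal_mul hpos.le]
  congr 1
  have huv : -(E - 1)⁻¹ - (1 + (F - 1)⁻¹) = -((E * F - 1) / ((E - 1) * (F - 1))) := by
    field_simp
    ring
  have hE0 : E ≠ 0 := by positivity
  have hF0 : F ≠ 0 := by positivity
  rw [huv, sinh_sq_eq, ← hEF, neg_sq, div_pow, one_div, inv_div]
  field_simp
  ring

lemma L_Φ {p : ℝ × ℝ} (hp : p ∈ D) :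
    (1 / 2) * Real.log ((Φ p).2 * (1 - (Φ p).1) / ((-(Φ p).1) * ((Φ p).2 - 1))) = p.1 := by
  obtain ⟨x, t⟩ := p
  obtain ⟨hx, ht⟩ := hp
  obtain ⟨ht1, ht2⟩ := abs_lt.1 ht
  dsimp only at hx ht1 ht2
  simp only [Φ]
  set E := Real.exp (x + t) with hE_def
  set F := Real.exp (x - t) with hF_def
  have hE : 1 < E := one_lt_exp_of_pos (by linarith)
  have hF : 1 < F := one_lt_exp_of_pos (by linarith)
  have hE1 : E - 1 ≠ 0 := by intro h; simp only [sub_eq_zero] at h; exact absurd h.symm hE.ne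
  have hF1 : F - 1 ≠ 0 := by intro h; simp only [sub_eq_zero] at h; exact absurd h.symm hF.ne
  have harg : (1 + (F - 1)⁻¹) * (1 - -(E - 1)⁻¹) / (-(-(E - 1)⁻¹) * (1 + (F - 1)⁻¹ - 1))
      = E * F := by
    rw [neg_neg]
    field_simp
    ring
  rw [harg, hE_def, hF_def, ← Real.exp_add, Real.log_exp]
  ring

lemma measurable_g :
    Measurable (fun p : ℝ × ℝ => ENNReal.ofReal (1 / (2 * Real.sinh p.1 ^ 2))) := by
  fun_prop

lemma map_fst_eq :
    Measure.map Prod.fst ((volume.restrict D).withDensity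
        (fun p : ℝ × ℝ => ENNReal.ofReal (1 / (2 * Real.sinh p.1 ^ 2))))
      = (volume.restrict (Set.Ioi (0 : ℝ))).withDensity
        (fun x => ENNReal.ofReal (x / Real.sinh x ^ 2)) := by
  set g : ℝ × ℝ → ℝ≥0∞ := fun p => ENNReal.ofReal (1 / (2 * Real.sinh p.1 ^ 2)) with hg_def
  ext s hs
  rw [Measure.map_apply measurable_fst hs, ← withDensity_indicator measurableSet_D,
    withDensity_apply _ (measurable_fst hs), withDensity_apply _ hs,
    Measure.restrict_restrict hs]
  rw [← lintegral_indicator (measurable_fst hs), Set.indicator_indicator]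
  rw [MeasureTheory.Measure.volume_eq_prod,
    MeasureTheory.lintegral_prod _
      ((measurable_g.indicator ((measurable_fst hs).inter measurableSet_D)).aemeasurable)]
  have key : ∀ x : ℝ,
      (∫⁻ y, ((Prod.fst ⁻¹' s) ∩ D).indicator g (x, y)) =
        (s ∩ Set.Ioi 0).indicator (fun x => ENNReal.ofReal (x / Real.sinh x ^ 2)) x := by
    intro x
    by_cases hx : x ∈ s ∩ Set.Ioi (0 : ℝ)
    · have hx0 : (0:ℝ) < x := hx.2
      have heq : ∀ y, ((Prod.fst ⁻¹' s) ∩ D).indicator g (x, y) =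
          (Set.Ioo (-x) x).indicator (fun _ => ENNReal.ofReal (1 / (2 * Real.sinh x ^ 2))) y := by
        intro y
        by_cases hy : y ∈ Set.Ioo (-x) x
        · rw [Set.indicator_of_mem hy, Set.indicator_of_mem]
          exact ⟨hx.1, hx0, abs_lt.2 ⟨hy.1, hy.2⟩⟩
        · rw [Set.indicator_of_notMem hy, Set.indicator_of_notMem]
          rintro ⟨-, -, habs⟩
          exact hy (Set.mem_Ioo.2 (abs_lt.1 habs))
      simp only [heq]
      rw [lintegral_indicator_const measurableSet_Ioo, Real.volume_Ioo,
        Set.indicator_of_mem hx, ← ENNReal.ofReal_mul (by positivity)]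
      congr 1
      have hsx : Real.sinh x ≠ 0 := (Real.sinh_pos_iff.2 hx0).ne'
      rw [show x - -x = 2 * x by ring]
      field_simp
    · rw [Set.indicator_of_notMem hx]
      have heq : ∀ y, ((Prod.fst ⁻¹' s) ∩ D).indicator g (x, y) = 0 := by
        intro y
        apply Set.indicator_of_notMem
        rintro ⟨h1, h2, -⟩
        exact hx ⟨h1, h2⟩
      simp only [heq, lintegral_zero]
  rw [← hg_def]
  simp only [key]
  rw [lintegral_indicator (hs.inter measurableSet_Ioi)]

lemma map_comp_withDensity {α β : Type*} [MeasurableSpace α] [MeasurableSpace β]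
    (μ : Measure α) {Φ : α → β} (hΦ : Measurable Φ) {g : β → ℝ≥0∞} (hg : Measurable g) :
    Measure.map Φ (μ.withDensity (fun x => g (Φ x))) = (Measure.map Φ μ).withDensity g := by
  ext s hs
  rw [Measure.map_apply hΦ hs, withDensity_apply _ (hΦ hs), withDensity_apply _ hs,
    setLIntegral_map hs hg hΦ]

lemma exp_add_ne_one {p : ℝ × ℝ} (hp : p ∈ D) : Real.exp (p.1 + p.2) ≠ 1 := by
  obtain ⟨h1, h2⟩ := abs_lt.1 hp.2
  exact (one_lt_exp_of_pos (by linarith [hp.1])).ne'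

lemma exp_sub_ne_one {p : ℝ × ℝ} (hp : p ∈ D) : Real.exp (p.1 - p.2) ≠ 1 := by
  obtain ⟨h1, h2⟩ := abs_lt.1 hp.2
  exact (one_lt_exp_of_pos (by linarith [hp.1])).ne'

end Liouville13

end LiouvilleAux

/-- The pushforward of the Liouville measure `du dv/(u−v)²` on `(−∞,0) × (1,∞)` under
the length function `L(u,v) = (1/2)·log( v(1−u) / ((−u)(v−1)) )` is the measure
`x/sinh²(x) dx` on `(0,∞)`. -/
theorem pushforward_liouville_L13 :
    Measure.map
      (fun p : ℝ × ℝ => (1 / 2) * Real.log (p.2 * (1 - p.1) / ((-p.1) * (p.2 - 1))))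
      (((volume : Measure (ℝ × ℝ)).restrict (Set.Iio 0 ×ˢ Set.Ioi 1)).withDensity
        fun p => ENNReal.ofReal (1 / (p.1 - p.2) ^ 2))
    = (volume.restrict (Set.Ioi (0 : ℝ))).withDensity
        fun x => ENNReal.ofReal (x / Real.sinh x ^ 2) := by
  open Liouville13 in
  set L : ℝ × ℝ → ℝ :=
    fun p : ℝ × ℝ => (1 / 2) * Real.log (p.2 * (1 - p.1) / ((-p.1) * (p.2 - 1))) with hL_def
  set ρ : ℝ × ℝ → ℝ≥0∞ := fun p => ENNReal.ofReal (1 / (p.1 - p.2) ^ 2) with hρ_def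
  set δ : ℝ × ℝ → ℝ≥0∞ := fun p => ENNReal.ofReal |(Liouville13.Φ' p).det| with hδ_def
  set g : ℝ × ℝ → ℝ≥0∞ :=
    fun p => ENNReal.ofReal (1 / (2 * Real.sinh p.1 ^ 2)) with hg_def
  have hL : Measurable L := by
    unfold L
    apply Measurable.const_mul
    exact Real.measurable_log.comp ((measurable_snd.mul (measurable_const.sub measurable_fst)).div
      (measurable_fst.neg.mul (measurable_snd.sub measurable_const)))
  have hρ : Measurable ρ := by unfold ρ; fun_prop
  have hρΦ : Measurable (fun p => ρ (Liouville13.Φ p)) := hρ.comp Liouville13.measurable_Φ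
  have hδ : Measurable δ := by
    have hd : δ = fun p : ℝ × ℝ =>
        ENNReal.ofReal |2 * (Real.exp (p.1 + p.2) / (Real.exp (p.1 + p.2) - 1) ^ 2) *
          (Real.exp (p.1 - p.2) / (Real.exp (p.1 - p.2) - 1) ^ 2)| :=
      funext fun p => by simp only [hδ_def, Liouville13.det_Φ']
    rw [hd]; fun_prop
  have h1 : Measure.map Liouville13.Φ ((volume.restrict Liouville13.D).withDensity δ)
      = volume.restrict (Set.Iio 0 ×ˢ Set.Ioi 1) := by
    rw [← Liouville13.image_Φ]
    exact map_withDensity_abs_det_fderiv_eq_addHaar volume Liouville13.measurableSet_D.nullMeasurableSet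
      (fun p hp => (Liouville13.hasFDerivAt_Φ (Liouville13.exp_add_ne_one hp)
        (Liouville13.exp_sub_ne_one hp)).hasFDerivWithinAt)
      Liouville13.injOn_Φ
  have h2 : ((volume.restrict Liouville13.D).withDensity δ).withDensity
        (fun p => ρ (Liouville13.Φ p))
      = (volume.restrict Liouville13.D).withDensity g := by
    rw [← withDensity_mul _ hδ hρΦ]
    apply withDensity_congr_ae
    filter_upwards [ae_restrict_mem Liouville13.measurableSet_D] with p hp
    exact Liouville13.density_eq hp
  have h3 : (L ∘ Liouville13.Φ)
      =ᵐ[(volume.restrict Liouville13.D).withDensity g] Prod.fst := by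
    apply Filter.EventuallyEq.filter_mono _ (withDensity_absolutelyContinuous _ _).ae_le
    filter_upwards [ae_restrict_mem Liouville13.measurableSet_D] with p hp
    exact Liouville13.L_Φ hp
  calc Measure.map L ((volume.restrict (Set.Iio 0 ×ˢ Set.Ioi 1)).withDensity ρ)
      = Measure.map L ((Measure.map Liouville13.Φ
          ((volume.restrict Liouville13.D).withDensity δ)).withDensity ρ) := by rw [h1]
    _ = Measure.map L (Measure.map Liouville13.Φ
          (((volume.restrict Liouville13.D).withDensity δ).withDensity
            (fun p => ρ (Liouville13.Φ p)))) := by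
        rw [Liouville13.map_comp_withDensity _ Liouville13.measurable_Φ hρ]
    _ = Measure.map L (Measure.map Liouville13.Φ
          ((volume.restrict Liouville13.D).withDensity g)) := by rw [h2]
    _ = Measure.map (L ∘ Liouville13.Φ)
          ((volume.restrict Liouville13.D).withDensity g) :=
        Measure.map_map hL Liouville13.measurable_Φ
    _ = Measure.map Prod.fst ((volume.restrict Liouville13.D).withDensity g) :=
        Measure.map_congr h3
    _ = (volume.restrict (Set.Ioi (0 : ℝ))).withDensity
          (fun x => ENNReal.ofReal (x / Real.sinh x ^ 2)) := Liouville13.map_fst_eq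
end

section
/- Let a, b, c, d be real numbers with ad − bc = 1, and let T : ℝ² → ℝ² be the map T(x,y) = ((ax+b)/(cx+d), (ay+b)/(cy+d)) (defined with arbitrary values on the Lebesgue-null set where cx+d = 0 or cy+d = 0). Let μ_L be the measure on ℝ² obtained from Lebesgue measure by taking density (x,y) ↦ 1/(x−y)². Then the pushforward of μ_L under T equals μ_L. (This is the invariance of the Liouville measure on the space of geodesics under Möbius transformations, which follows from the invariance of the cross-ratio.) -/
open MeasureTheory Real

lemma det_aux (r r' : ℝ) :
    (((1 : ℝ →L[ℝ] ℝ).smulRight r).prodMap ((1 : ℝ →L[ℝ] ℝ).smulRight r')).det = r * r' := by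
  rw [ContinuousLinearMap.det, ← LinearMap.det_toMatrix (Module.Basis.finTwoProd ℝ), Matrix.det_fin_two]
  simp [LinearMap.toMatrix_apply, Module.Basis.finTwoProd]

/-- Invariance of the Liouville measure `dx dy/(x−y)²` on ℝ² under the Möbius
transformation `T(x,y) = ((ax+b)/(cx+d), (ay+b)/(cy+d))` with `ad − bc = 1`
(its values on the null set where a denominator vanishes are irrelevant;
here division by zero yields the junk value `0`). -/
theorem liouville_measure_mobius_invariant (a b c d : ℝ) (h : a * d - b * c = 1) :
    Measure.map
      (fun p : ℝ × ℝ =>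
        ((a * p.1 + b) / (c * p.1 + d), (a * p.2 + b) / (c * p.2 + d)))
      ((volume : Measure (ℝ × ℝ)).withDensity
        fun p => ENNReal.ofReal (1 / (p.1 - p.2) ^ 2))
    = (volume : Measure (ℝ × ℝ)).withDensity
        fun p => ENNReal.ofReal (1 / (p.1 - p.2) ^ 2) := by
  set f : ℝ → ℝ := fun x => (a * x + b) / (c * x + d) with hf
  set T : ℝ × ℝ → ℝ × ℝ := fun p => (f p.1, f p.2) with hT
  set ρ : ℝ × ℝ → ENNReal := fun p => ENNReal.ofReal (1 / (p.1 - p.2) ^ 2) with hρ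
  -- 1D facts
  have hfinj : ∀ x y, c * x + d ≠ 0 → c * y + d ≠ 0 → f x = f y → x = y := by
    intro x y hx hy hxy
    rw [hf, div_eq_div_iff hx hy] at hxy
    have : (a * d - b * c) * (x - y) = 0 := by ring_nf; nlinarith [hxy]
    rw [h] at this; linarith
  have hfsub : ∀ x y, c * x + d ≠ 0 → c * y + d ≠ 0 →
      f x - f y = (x - y) / ((c * x + d) * (c * y + d)) := by
    intro x y hx hy
    rw [hf]; simp only; rw [div_sub_div _ _ hx hy]; congr 1; linear_combination (x - y) * h
  have hfden : ∀ x, c * x + d ≠ 0 → a - c * f x = 1 / (c * x + d) := by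
    intro x hx; rw [hf]; field_simp; linear_combination h
  have hfderiv : ∀ x, c * x + d ≠ 0 →
      HasDerivAt f (1 / (c * x + d) ^ 2) x := by
    intro x hx
    have h1 : HasDerivAt (fun x : ℝ => a * x + b) a x := by
      simpa using ((hasDerivAt_id x).const_mul a).add_const b
    have h2 : HasDerivAt (fun x : ℝ => c * x + d) c x := by
      simpa using ((hasDerivAt_id x).const_mul c).add_const d
    have := h1.div h2 hx
    rw [show a * (c * x + d) - (a * x + b) * c = 1 by linear_combination h] at this
    exact this
  -- the good set
  set s : Set (ℝ × ℝ) := {p | c * p.1 + d ≠ 0 ∧ c * p.2 + d ≠ 0} with hs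
  have hmeas1 : Measurable fun p : ℝ × ℝ => c * p.1 + d := by fun_prop
  have hmeas2 : Measurable fun p : ℝ × ℝ => c * p.2 + d := by fun_prop
  have hsm : MeasurableSet s := by
    have : s = {p : ℝ × ℝ | c * p.1 + d = 0}ᶜ ∩ {p : ℝ × ℝ | c * p.2 + d = 0}ᶜ := by
      ext p; simp [hs]
    rw [this]
    exact ((hmeas1 (measurableSet_singleton 0)).compl).inter
      ((hmeas2 (measurableSet_singleton 0)).compl)
  -- complement of s is null
  have hnull1 : (volume : Measure ℝ) {x : ℝ | c * x + d = 0} = 0 := by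
    have : ({x : ℝ | c * x + d = 0} : Set ℝ).Subsingleton := by
      intro x hx y hy
      simp only [Set.mem_setOf_eq] at hx hy
      rcases eq_or_ne c 0 with hc | hc
      · exfalso
        have hd : d = 0 := by simpa [hc] using hx
        rw [hc, hd] at h; norm_num at h
      · have hxy : c * x = c * y := by linarith
        exact mul_left_cancel₀ hc hxy
    exact Set.Countable.measure_zero this.countable _
  have hsc_null : (volume : Measure (ℝ × ℝ)) sᶜ = 0 := by
    have hsub : sᶜ ⊆ ({x : ℝ | c * x + d = 0} ×ˢ Set.univ) ∪
        (Set.univ ×ˢ {x : ℝ | c * x + d = 0}) := by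
      intro p hp
      simp only [hs, Set.mem_compl_iff, Set.mem_setOf_eq, not_and_or, not_not] at hp
      rcases hp with hp | hp
      · left; exact ⟨by simpa using hp, Set.mem_univ _⟩
      · right; exact ⟨Set.mem_univ _, by simpa using hp⟩
    refine measure_mono_null hsub (measure_union_null ?_ ?_)
    · rw [Measure.volume_eq_prod, Measure.prod_prod, hnull1, zero_mul]
    · rw [Measure.volume_eq_prod, Measure.prod_prod, hnull1, mul_zero]
  -- measurability of T
  have hTmeas : Measurable T := by
    rw [hT, hf]; fun_prop
  -- derivative of T on s
  set J : ℝ × ℝ → (ℝ × ℝ →L[ℝ] ℝ × ℝ) := fun p =>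
    ((1 : ℝ →L[ℝ] ℝ).smulRight (1 / (c * p.1 + d) ^ 2)).prodMap
      ((1 : ℝ →L[ℝ] ℝ).smulRight (1 / (c * p.2 + d) ^ 2)) with hJ
  have hTderiv : ∀ p ∈ s, HasFDerivAt T (J p) p := by
    rintro p ⟨h1, h2⟩
    exact ((hfderiv p.1 h1).hasFDerivAt).prodMap p ((hfderiv p.2 h2).hasFDerivAt)
  -- injectivity on s
  have hTinj : Set.InjOn T s := by
    rintro p ⟨h1, h2⟩ q ⟨h3, h4⟩ hpq
    have e1 : f p.1 = f q.1 := congrArg Prod.fst hpq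
    have e2 : f p.2 = f q.2 := congrArg Prod.snd hpq
    exact Prod.ext (hfinj _ _ h1 h3 e1) (hfinj _ _ h2 h4 e2)
  -- image of s
  have hTimage : T '' s = {q : ℝ × ℝ | a - c * q.1 ≠ 0 ∧ a - c * q.2 ≠ 0} := by
    ext q
    constructor
    · rintro ⟨p, ⟨h1, h2⟩, rfl⟩
      constructor
      · rw [hT]; simp only; rw [hfden p.1 h1]; exact one_div_ne_zero h1
      · rw [hT]; simp only; rw [hfden p.2 h2]; exact one_div_ne_zero h2
    · rintro ⟨h1, h2⟩
      set g : ℝ → ℝ := fun t => (d * t - b) / (a - c * t) with hg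
      have hden : ∀ t, a - c * t ≠ 0 → c * g t + d = 1 / (a - c * t) := by
        intro t ht; rw [hg]; field_simp; linear_combination h
      have hgf : ∀ t, a - c * t ≠ 0 → f (g t) = t := by
        intro t ht
        have hd := hden t ht
        rw [hf]; simp only
        rw [hd, div_div_eq_mul_div, div_one, hg]
        rw [mul_div_assoc', div_add' _ _ _ ht, div_mul_cancel₀ _ ht]
        linear_combination t * h
      refine ⟨(g q.1, g q.2), ⟨?_, ?_⟩, ?_⟩
      · rw [hden q.1 h1]; exact one_div_ne_zero h1
      · rw [hden q.2 h2]; exact one_div_ne_zero h2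
      · rw [hT]; simp only [hgf q.1 h1, hgf q.2 h2]
  -- a.e. equivalences
  have hs_ae : s =ᵐ[(volume : Measure (ℝ × ℝ))] Set.univ :=
    MeasureTheory.ae_eq_univ.2 hsc_null
  have hnull2 : (volume : Measure ℝ) {x : ℝ | a - c * x = 0} = 0 := by
    have : ({x : ℝ | a - c * x = 0} : Set ℝ).Subsingleton := by
      intro x hx y hy
      simp only [Set.mem_setOf_eq] at hx hy
      rcases eq_or_ne c 0 with hc | hc
      · exfalso
        have ha : a = 0 := by simpa [hc] using hx
        rw [hc, ha] at h; norm_num at h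
      · have hxy : c * x = c * y := by linarith
        exact mul_left_cancel₀ hc hxy
    exact Set.Countable.measure_zero this.countable _
  have hTs_null : (volume : Measure (ℝ × ℝ)) (T '' s)ᶜ = 0 := by
    have hsub : (T '' s)ᶜ ⊆ ({x : ℝ | a - c * x = 0} ×ˢ Set.univ) ∪
        (Set.univ ×ˢ {x : ℝ | a - c * x = 0}) := by
      intro p hp
      rw [Set.mem_compl_iff, hTimage] at hp
      simp only [Set.mem_setOf_eq, not_and_or, not_not] at hp
      rcases hp with hp | hp
      · left; exact ⟨by simpa using hp, Set.mem_univ _⟩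
      · right; exact ⟨Set.mem_univ _, by simpa using hp⟩
    refine measure_mono_null hsub (measure_union_null ?_ ?_)
    · rw [Measure.volume_eq_prod, Measure.prod_prod, hnull2, zero_mul]
    · rw [Measure.volume_eq_prod, Measure.prod_prod, hnull2, mul_zero]
  have hTs_ae : (T '' s) =ᵐ[(volume : Measure (ℝ × ℝ))] Set.univ :=
    MeasureTheory.ae_eq_univ.2 hTs_null
  -- main computation
  refine Measure.ext fun A hA => ?_
  rw [Measure.map_apply hTmeas hA, withDensity_apply _ (hTmeas hA), withDensity_apply _ hA]
  have hsTA : MeasurableSet (s ∩ T ⁻¹' A) := hsm.inter (hTmeas hA)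
  have hL : ∫⁻ p in T ⁻¹' A, ρ p ∂volume = ∫⁻ p in s ∩ T ⁻¹' A, ρ p ∂volume := by
    refine (setLIntegral_congr ?_).symm
    rw [Set.inter_comm]
    exact MeasureTheory.inter_ae_eq_left_of_ae_eq_univ hs_ae
  have hR : ∫⁻ p in A, ρ p ∂volume = ∫⁻ p in T '' (s ∩ T ⁻¹' A), ρ p ∂volume := by
    refine (setLIntegral_congr ?_).symm
    rw [Set.image_inter_preimage, Set.inter_comm]
    exact MeasureTheory.inter_ae_eq_left_of_ae_eq_univ hTs_ae
  rw [hL, hR]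
  rw [lintegral_image_eq_lintegral_abs_det_fderiv_mul volume hsTA
    (fun p hp => (hTderiv p hp.1).hasFDerivWithinAt) (hTinj.mono Set.inter_subset_left) ρ]
  refine setLIntegral_congr_fun hsTA ?_
  rintro p ⟨⟨h1, h2⟩, -⟩
  beta_reduce
  have hdet : (J p).det = 1 / (c * p.1 + d) ^ 2 * (1 / (c * p.2 + d) ^ 2) := det_aux _ _
  rw [hdet]
  by_cases hxy : p.1 = p.2
  · have : (T p).1 - (T p).2 = 0 := by simp [hT, hxy]
    simp only [hρ, this, hxy, sub_self]
    norm_num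
  · have hxy' : p.1 - p.2 ≠ 0 := sub_ne_zero.2 hxy
    have hsub := hfsub p.1 p.2 h1 h2
    have hT1 : (T p).1 = f p.1 := rfl
    have hT2 : (T p).2 = f p.2 := rfl
    simp only [hρ, hT1, hT2]
    rw [← ENNReal.ofReal_mul (abs_nonneg _)]
    congr 1
    rw [abs_of_nonneg (by positivity), show f p.1 - f p.2 = _ from hsub]
    rw [div_pow, one_div_div, mul_pow]
    field_simp
    exact (div_self (by rw [mul_comm p.1 c, mul_comm p.2 c]; exact mul_ne_zero h1 h2)).symm
end

section
/- Let L : ℝ² → ℝ be defined by L(u,v) = (1/2)·log((1−u)/(1−v)), and let ν be the measure on ℝ² obtained from Lebesgue measure restricted to the region (−∞,0) × (0,1) by taking density (u,v) ↦ 2·L(u,v)/(u−v)². Then the pushforward of ν under L equals the measure on ℝ obtained from Lebesgue measure restricted to (0,∞) by taking density x ↦ 2x²/sinh²(x). (This is the length-weighted pushforward computation underlying Theorem 8: integrating the fiber length over each geodesic converts the Liouville measure into the unit-tangent-bundle volume, yielding the probability density 6x²/(π² sinh²x) after normalization.) -/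
open MeasureTheory Real Set
open scoped ENNReal

namespace LiouvilleAux

lemma lintegral_image_1d {s : Set ℝ} {f f' : ℝ → ℝ} (hs : MeasurableSet s)
    (hf' : ∀ x ∈ s, HasDerivWithinAt f (f' x) s x) (hf : Set.InjOn f s) (g : ℝ → ℝ≥0∞) :
    ∫⁻ x in f '' s, g x = ∫⁻ x in s, ENNReal.ofReal |f' x| * g (f x) := by
  simpa only [ContinuousLinearMap.det_toSpanSingleton] using
    lintegral_image_eq_lintegral_abs_det_fderiv_mul volume hs
      (fun x hx => (hf' x hx).hasFDerivWithinAt) hf g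

noncomputable def cc (v : ℝ) : ℝ := -Real.log (1 - v) / 2
noncomputable def kk (x : ℝ) : ℝ := 4 * x * Real.exp (2*x) / (Real.exp (2*x) - 1)^2

lemma cc_meas : Measurable cc :=
  ((Real.measurable_log.comp (measurable_const.sub measurable_id)).neg).div_const 2

lemma kk_meas : Measurable kk := by
  unfold kk
  exact ((measurable_id.const_mul 4 |>.mul (Real.measurable_exp.comp (measurable_id.const_mul 2))).div
    (((Real.measurable_exp.comp (measurable_id.const_mul 2)).sub measurable_const).pow_const 2))

lemma kk_nonneg {x : ℝ} (hx : 0 < x) : 0 ≤ kk x := by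
  unfold kk
  apply div_nonneg _ (sq_nonneg _)
  have := (Real.exp_pos (2*x)).le
  nlinarith

lemma imageA {v : ℝ} (hv0 : 0 < v) (hv1 : v < 1) :
    (fun u => (1/2 : ℝ) * Real.log ((1 - u) / (1 - v))) '' Set.Iio 0 = Set.Ioi (cc v) := by
  have h1v : (0:ℝ) < 1 - v := by linarith
  ext x
  simp only [mem_image, mem_Iio, mem_Ioi]
  constructor
  · rintro ⟨u, hu, rfl⟩
    have h1u : (1:ℝ) < 1 - u := by linarith
    rw [Real.log_div (by linarith) (ne_of_gt h1v)]
    have : 0 < Real.log (1 - u) := Real.log_pos h1u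
    unfold cc; linarith
  · intro hx
    refine ⟨1 - (1 - v) * Real.exp (2*x), ?_, ?_⟩
    · have : Real.log (1-v)⁻¹ < 2*x := by
        unfold cc at hx
        rw [Real.log_inv]; linarith
      have h2 : (1-v)⁻¹ < Real.exp (2*x) := (Real.log_lt_iff_lt_exp (inv_pos.2 h1v)).1 this
      have h3 : 1 < (1-v) * Real.exp (2*x) := by
        have := mul_lt_mul_of_pos_left h2 h1v
        rwa [mul_inv_cancel₀ (ne_of_gt h1v)] at this
      linarith
    · have hne : (1 - (1 - (1-v) * Real.exp (2*x))) = (1-v) * Real.exp (2*x) := by ring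
      rw [hne, mul_comm (1-v) (Real.exp (2*x)), mul_div_assoc, div_self (ne_of_gt h1v),
        mul_one, Real.log_exp]
      ring

lemma imageB {x : ℝ} (hx : 0 < x) :
    (fun t => 1 - Real.exp t) '' Set.Ioo (-(2*x)) 0 = Set.Ioo 0 (1 - Real.exp (-(2*x))) := by
  ext y
  simp only [mem_image, mem_Ioo]
  constructor
  · rintro ⟨t, ⟨ht1, ht2⟩, rfl⟩
    have h1 : Real.exp t < Real.exp 0 := Real.exp_lt_exp.2 ht2
    have h2 : Real.exp (-(2*x)) < Real.exp t := Real.exp_lt_exp.2 ht1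
    rw [Real.exp_zero] at h1
    constructor <;> linarith
  · rintro ⟨hy1, hy2⟩
    have h1y : 0 < 1 - y := by
      have := Real.exp_pos (-(2*x)); linarith
    refine ⟨Real.log (1 - y), ⟨?_, ?_⟩, ?_⟩
    · have : Real.exp (-(2*x)) < 1 - y := by linarith
      have := Real.log_lt_log (Real.exp_pos _) this
      rwa [Real.log_exp] at this
    · exact Real.log_neg h1y (by linarith)
    · rw [Real.exp_log h1y]; ring

lemma derivA {v u : ℝ} (hv1 : v < 1) (hu : u ∈ Set.Iio (0:ℝ)) :
    HasDerivWithinAt (fun u => (1/2 : ℝ) * Real.log ((1 - u) / (1 - v)))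
      (-(1/(2*(1-u)))) (Set.Iio 0) u := by
  have h1v : (0:ℝ) < 1 - v := by linarith
  have h1u : (0:ℝ) < 1 - u := by simp at hu; linarith
  have h1 : HasDerivAt (fun u : ℝ => 1 - u) (-1) u := by
    simpa using (hasDerivAt_id u).const_sub 1
  have h2 : HasDerivAt (fun u : ℝ => Real.log (1 - u)) ((1-u)⁻¹ * (-1)) u :=
    (Real.hasDerivAt_log (ne_of_gt h1u)).comp u h1
  have h3 : HasDerivAt (fun u : ℝ => (1/2 : ℝ) * (Real.log (1 - u) - Real.log (1 - v)))
      ((1/2) * ((1-u)⁻¹ * (-1))) u := (h2.sub_const _).const_mul _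
  have h4 := h3.hasDerivWithinAt (s := Set.Iio 0)
  have heq : ∀ y ∈ Set.Iio (0:ℝ),
      (1/2 : ℝ) * (Real.log (1 - y) - Real.log (1 - v))
        = (1/2 : ℝ) * Real.log ((1 - y) / (1 - v)) := by
    intro y hy
    simp only [mem_Iio] at hy
    rw [Real.log_div (by linarith) (ne_of_gt h1v)]
  have := h4.congr (fun y hy => (heq y hy).symm) ((heq u hu).symm)
  rw [show -(1/(2*(1-u))) = (1/2) * ((1-u)⁻¹ * (-1)) by rw [one_div, mul_inv]; ring]
  exact this

lemma injA {v : ℝ} (hv1 : v < 1) :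
    Set.InjOn (fun u => (1/2 : ℝ) * Real.log ((1 - u) / (1 - v))) (Set.Iio 0) := by
  intro a ha b hb h
  simp only [mem_Iio] at ha hb
  have h1v : (0:ℝ) < 1 - v := by linarith
  have h' : (1/2 : ℝ) * Real.log ((1 - a) / (1 - v))
      = (1/2 : ℝ) * Real.log ((1 - b) / (1 - v)) := h
  rw [Real.log_div (by linarith) (ne_of_gt h1v), Real.log_div (by linarith) (ne_of_gt h1v)] at h'
  have hlog : Real.log (1 - a) = Real.log (1 - b) := by linarith [h']
  have := Real.log_injOn_pos (by simp; linarith : (1-a) ∈ Set.Ioi (0:ℝ))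
    (by simp; linarith : (1-b) ∈ Set.Ioi (0:ℝ)) hlog
  linarith


lemma inner_u (S : Set ℝ) (hS : MeasurableSet S) {v : ℝ} (hv0 : 0 < v) (hv1 : v < 1) :
    (∫⁻ u in Set.Iio (0:ℝ),
       ((fun p : ℝ × ℝ => (1 / 2) * Real.log ((1 - p.1) / (1 - p.2))) ⁻¹' S).indicator
         (fun p : ℝ × ℝ => ENNReal.ofReal
           (2 * ((1 / 2) * Real.log ((1 - p.1) / (1 - p.2))) / (p.1 - p.2) ^ 2)) (u, v))
    = ∫⁻ x, (Set.Ioi (cc v)).indicator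
        (fun x => S.indicator (fun _ => (1:ℝ≥0∞)) x * ENNReal.ofReal (kk x / (1 - v))) x := by
  have h1v : (0:ℝ) < 1 - v := by linarith
  have step1 : (∫⁻ u in Set.Iio (0:ℝ),
       ((fun p : ℝ × ℝ => (1 / 2) * Real.log ((1 - p.1) / (1 - p.2))) ⁻¹' S).indicator
         (fun p : ℝ × ℝ => ENNReal.ofReal
           (2 * ((1 / 2) * Real.log ((1 - p.1) / (1 - p.2))) / (p.1 - p.2) ^ 2)) (u, v))
      = ∫⁻ u in Set.Iio (0:ℝ), ENNReal.ofReal |(-(1/(2*(1-u))))|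
          * ((fun x => S.indicator (fun _ => (1:ℝ≥0∞)) x * ENNReal.ofReal (kk x / (1 - v)))
              ((fun u => (1/2 : ℝ) * Real.log ((1 - u) / (1 - v))) u)) := by
    refine setLIntegral_congr_fun measurableSet_Iio (fun u hu => ?_)
    simp only [mem_Iio] at hu
    have h1u : (0:ℝ) < 1 - u := by linarith
    by_cases hmem : (1/2 : ℝ) * Real.log ((1 - u) / (1 - v)) ∈ S
    · have hmem' : ((u,v) : ℝ × ℝ) ∈
          (fun p : ℝ × ℝ => 1 / 2 * Real.log ((1 - p.1) / (1 - p.2))) ⁻¹' S := hmem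
      rw [Set.indicator_of_mem hmem']
      show ENNReal.ofReal (2 * (1 / 2 * Real.log ((1 - u) / (1 - v))) / (u - v) ^ 2)
          = ENNReal.ofReal |(-(1/(2*(1-u))))| *
            (S.indicator (fun _ => (1:ℝ≥0∞)) (1 / 2 * Real.log ((1 - u) / (1 - v))) *
              ENNReal.ofReal (kk (1 / 2 * Real.log ((1 - u) / (1 - v))) / (1 - v)))
      rw [Set.indicator_of_mem hmem, one_mul]
      have habs : |(-(1/(2*(1-u))))| = 1/(2*(1-u)) := by
        rw [abs_neg, abs_of_pos (by positivity)]
      rw [habs, ← ENNReal.ofReal_mul (by positivity)]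
      congr 1
      have hA : (0:ℝ) < (1-u)/(1-v) := div_pos (by linarith) h1v
      have hexp : Real.exp (2 * ((1/2 : ℝ) * Real.log ((1-u)/(1-v)))) = (1-u)/(1-v) := by
        rw [show 2 * ((1/2 : ℝ) * Real.log ((1-u)/(1-v))) = Real.log ((1-u)/(1-v)) by ring,
          Real.exp_log hA]
      unfold kk
      rw [hexp, show (1-u)/(1-v) - 1 = (v-u)/(1-v) by field_simp; ring]
      have huv : u - v ≠ 0 := by intro h; linarith [sub_eq_zero.1 h]
      have hvu : v - u ≠ 0 := by intro h; linarith [sub_eq_zero.1 h]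
      field_simp
      ring
    · have hmem' : ((u,v) : ℝ × ℝ) ∉
          (fun p : ℝ × ℝ => 1 / 2 * Real.log ((1 - p.1) / (1 - p.2))) ⁻¹' S := hmem
      rw [Set.indicator_of_notMem hmem']
      show (0:ℝ≥0∞) = ENNReal.ofReal |(-(1/(2*(1-u))))| *
            (S.indicator (fun _ => (1:ℝ≥0∞)) (1 / 2 * Real.log ((1 - u) / (1 - v))) *
              ENNReal.ofReal (kk (1 / 2 * Real.log ((1 - u) / (1 - v))) / (1 - v)))
      rw [Set.indicator_of_notMem hmem, zero_mul, mul_zero]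
  have himg := lintegral_image_1d (f' := fun u => -(1/(2*(1-u)))) measurableSet_Iio
    (fun u hu => derivA (v := v) hv1 hu) (injA hv1)
    (fun x => S.indicator (fun _ => (1:ℝ≥0∞)) x * ENNReal.ofReal (kk x / (1 - v)))
  rw [step1, ← himg, imageA hv0 hv1, ← lintegral_indicator measurableSet_Ioi]

lemma inner_v (S : Set ℝ) (hS : MeasurableSet S) (x : ℝ) :
    (∫⁻ v in Set.Ioo (0:ℝ) 1, (Set.Ioi (cc v)).indicator
        (fun y => S.indicator (fun _ => (1:ℝ≥0∞)) y * ENNReal.ofReal (kk y / (1 - v))) x)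
    = (S ∩ Set.Ioi 0).indicator (fun y => ENNReal.ofReal (2 * y^2 / Real.sinh y^2)) x := by
  by_cases hx : 0 < x
  · have hexpLt : Real.exp (-(2*x)) < 1 := by
      rw [← Real.exp_zero]; exact Real.exp_lt_exp.2 (by linarith)
    have hb0 : 0 < 1 - Real.exp (-(2*x)) := by linarith
    have hb1 : 1 - Real.exp (-(2*x)) < 1 := by have := Real.exp_pos (-(2*x)); linarith
    have step1 : (∫⁻ v in Set.Ioo (0:ℝ) 1, (Set.Ioi (cc v)).indicator
        (fun y => S.indicator (fun _ => (1:ℝ≥0∞)) y * ENNReal.ofReal (kk y / (1 - v))) x)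
        = ∫⁻ v in Set.Ioo (0:ℝ) 1, S.indicator (fun _ => (1:ℝ≥0∞)) x
            * (Set.Iio (1 - Real.exp (-(2*x)))).indicator
                (fun v => ENNReal.ofReal (kk x / (1 - v))) v := by
      refine setLIntegral_congr_fun measurableSet_Ioo (fun v hv => ?_)
      obtain ⟨hv0, hv1⟩ := hv
      have h1v : (0:ℝ) < 1 - v := by linarith
      have hiff : cc v < x ↔ v < 1 - Real.exp (-(2*x)) := by
        unfold cc
        constructor
        · intro h
          have h2 : -(2*x) < Real.log (1-v) := by linarith
          have := (Real.lt_log_iff_exp_lt h1v).1 h2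
          linarith
        · intro h
          have h2 : Real.exp (-(2*x)) < 1 - v := by linarith
          have := (Real.lt_log_iff_exp_lt h1v).2 h2
          linarith
      by_cases hcv : cc v < x
      · rw [Set.indicator_of_mem (Set.mem_Ioi.2 hcv),
          Set.indicator_of_mem (Set.mem_Iio.2 (hiff.1 hcv))]
      · rw [Set.indicator_of_notMem (fun h => hcv (Set.mem_Ioi.1 h)),
          Set.indicator_of_notMem (fun h => hcv (hiff.2 (Set.mem_Iio.1 h))), mul_zero]
    have hmG : Measurable (fun v : ℝ => (Set.Iio (1 - Real.exp (-(2*x)))).indicator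
        (fun v => ENNReal.ofReal (kk x / (1 - v))) v) := by
      apply Measurable.indicator _ measurableSet_Iio
      exact ENNReal.measurable_ofReal.comp (measurable_const.div (measurable_const.sub measurable_id))
    rw [step1, lintegral_const_mul _ hmG,
      lintegral_indicator measurableSet_Iio, Measure.restrict_restrict measurableSet_Iio,
      show Set.Iio (1 - Real.exp (-(2*x))) ∩ Set.Ioo (0:ℝ) 1 = Set.Ioo 0 (1 - Real.exp (-(2*x)))
        from Set.ext fun y => ⟨fun ⟨h1, h2, _⟩ => ⟨h2, h1⟩, fun ⟨h1, h2⟩ => ⟨h2, h1, h2.trans hb1⟩⟩]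
    have step2 : (∫⁻ v in Set.Ioo (0:ℝ) (1 - Real.exp (-(2*x))),
        ENNReal.ofReal (kk x / (1 - v)))
        = ENNReal.ofReal (kk x) * ENNReal.ofReal (2*x) := by
      have e1 : (∫⁻ v in Set.Ioo (0:ℝ) (1 - Real.exp (-(2*x))), ENNReal.ofReal (kk x / (1 - v)))
          = ∫⁻ v in Set.Ioo (0:ℝ) (1 - Real.exp (-(2*x))),
              ENNReal.ofReal (kk x) * ENNReal.ofReal ((1 - v)⁻¹) := by
        refine setLIntegral_congr_fun measurableSet_Ioo (fun v hv => ?_)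
        rw [div_eq_mul_inv, ENNReal.ofReal_mul (kk_nonneg hx)]
      have hmH : Measurable (fun v : ℝ => ENNReal.ofReal ((1 - v)⁻¹)) :=
        ENNReal.measurable_ofReal.comp ((measurable_const.sub measurable_id).inv)
      rw [e1, lintegral_const_mul _ hmH]
      congr 1
      rw [← imageB hx, lintegral_image_1d measurableSet_Ioo
        (fun t _ => ((Real.hasDerivAt_exp t).const_sub 1).hasDerivWithinAt)
        (fun a _ b _ h => Real.exp_injective (by
          have h' : 1 - Real.exp a = 1 - Real.exp b := h
          linarith))]
      have e2 : (∫⁻ t in Set.Ioo (-(2*x)) 0, ENNReal.ofReal |(-Real.exp t)|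
          * ENNReal.ofReal ((1 - (1 - Real.exp t))⁻¹))
          = ∫⁻ _t in Set.Ioo (-(2*x)) 0, (1 : ℝ≥0∞) := by
        refine setLIntegral_congr_fun measurableSet_Ioo (fun t _ => ?_)
        rw [abs_neg, abs_of_pos (Real.exp_pos t),
          show (1 - (1 - Real.exp t)) = Real.exp t by ring,
          ← ENNReal.ofReal_mul (Real.exp_pos t).le, mul_inv_cancel₀ (Real.exp_ne_zero t),
          ENNReal.ofReal_one]
      rw [e2, setLIntegral_one, Real.volume_Ioo]
      norm_num
    rw [step2]
    by_cases hxS : x ∈ S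
    · rw [Set.indicator_of_mem hxS, Set.indicator_of_mem (Set.mem_inter hxS (Set.mem_Ioi.2 hx)),
        one_mul, ← ENNReal.ofReal_mul (kk_nonneg hx)]
      congr 1
      have hxne : Real.exp x ≠ 0 := Real.exp_ne_zero x
      have h2x : Real.exp (2*x) = Real.exp x * Real.exp x := by
        rw [← Real.exp_add]; ring_nf
      have h1lt : (1:ℝ) < Real.exp (2*x) := by
        rw [← Real.exp_zero]; exact Real.exp_lt_exp.2 (by linarith)
      have hd1 : Real.exp (2*x) - 1 ≠ 0 := ne_of_gt (by linarith)
      have hd2 : Real.exp x - (Real.exp x)⁻¹ ≠ 0 := by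
        have hlt : Real.exp (-x) < Real.exp x := Real.exp_lt_exp.2 (by linarith)
        rw [Real.exp_neg] at hlt
        exact ne_of_gt (by linarith)
      unfold kk
      rw [Real.sinh_eq, Real.exp_neg, h2x]
      have hd1' : Real.exp x * Real.exp x - 1 ≠ 0 := by rwa [h2x] at hd1
      field_simp
      ring
    · rw [Set.indicator_of_notMem hxS,
        Set.indicator_of_notMem (fun h => hxS h.1), zero_mul]
  · have step1 : (∫⁻ v in Set.Ioo (0:ℝ) 1, (Set.Ioi (cc v)).indicator
        (fun y => S.indicator (fun _ => (1:ℝ≥0∞)) y * ENNReal.ofReal (kk y / (1 - v))) x)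
        = ∫⁻ _v in Set.Ioo (0:ℝ) 1, (0 : ℝ≥0∞) := by
      refine setLIntegral_congr_fun measurableSet_Ioo (fun v hv => ?_)
      obtain ⟨hv0, hv1⟩ := hv
      have hccpos : 0 < cc v := by
        unfold cc
        have := Real.log_neg (by linarith : (0:ℝ) < 1 - v) (by linarith)
        linarith
      exact Set.indicator_of_notMem (fun h => hx (lt_trans hccpos (Set.mem_Ioi.1 h))) _
    rw [step1, lintegral_zero,
      Set.indicator_of_notMem (fun h => hx (Set.mem_Ioi.1 h.2))]

end LiouvilleAux

open LiouvilleAux in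
/-- With `L(u,v) = (1/2)·log((1−u)/(1−v))`, the pushforward under `L` of the
length-weighted Liouville measure `2·L(u,v)/(u−v)² du dv` on `(−∞,0) × (0,1)` is the
measure `2x²/sinh²(x) dx` on `(0,∞)`. -/
theorem pushforward_weighted_liouville_L12 :
    Measure.map (fun p : ℝ × ℝ => (1 / 2) * Real.log ((1 - p.1) / (1 - p.2)))
      (((volume : Measure (ℝ × ℝ)).restrict (Set.Iio 0 ×ˢ Set.Ioo 0 1)).withDensity
        fun p => ENNReal.ofReal
          (2 * ((1 / 2) * Real.log ((1 - p.1) / (1 - p.2))) / (p.1 - p.2) ^ 2))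
    = (volume.restrict (Set.Ioi (0 : ℝ))).withDensity
        fun x => ENNReal.ofReal (2 * x ^ 2 / Real.sinh x ^ 2) := by
  refine Measure.ext fun S hS => ?_
  have hLmeas : Measurable (fun p : ℝ × ℝ => (1 / 2) * Real.log ((1 - p.1) / (1 - p.2))) :=
    (Real.measurable_log.comp
      ((measurable_const.sub measurable_fst).div (measurable_const.sub measurable_snd))).const_mul _
  have hdensmeas : Measurable (fun p : ℝ × ℝ => ENNReal.ofReal
      (2 * ((1 / 2) * Real.log ((1 - p.1) / (1 - p.2))) / (p.1 - p.2) ^ 2)) :=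
    ENNReal.measurable_ofReal.comp
      ((hLmeas.const_mul 2).div ((measurable_fst.sub measurable_snd).pow_const 2))
  rw [Measure.map_apply hLmeas hS, withDensity_apply _ (hLmeas hS),
    ← lintegral_indicator (hLmeas hS),
    show ((volume : Measure (ℝ × ℝ)).restrict (Set.Iio 0 ×ˢ Set.Ioo 0 1))
        = (volume.restrict (Set.Iio 0)).prod (volume.restrict (Set.Ioo 0 1)) from by
      rw [Measure.volume_eq_prod, Measure.prod_restrict],
    lintegral_prod_symm _ (hdensmeas.indicator (hLmeas hS)).aemeasurable]
  rw [setLIntegral_congr_fun measurableSet_Ioo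
    (fun v hv => inner_u S hS hv.1 hv.2)]
  have hswap : (∫⁻ v in Set.Ioo (0:ℝ) 1, ∫⁻ x, (Set.Ioi (cc v)).indicator
        (fun x => S.indicator (fun _ => (1:ℝ≥0∞)) x * ENNReal.ofReal (kk x / (1 - v))) x)
      = ∫⁻ x, ∫⁻ v in Set.Ioo (0:ℝ) 1, (Set.Ioi (cc v)).indicator
          (fun x => S.indicator (fun _ => (1:ℝ≥0∞)) x * ENNReal.ofReal (kk x / (1 - v))) x := by
    apply lintegral_lintegral_swap
    have : (Function.uncurry fun v x => (Set.Ioi (cc v)).indicator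
        (fun x => S.indicator (fun _ => (1:ℝ≥0∞)) x * ENNReal.ofReal (kk x / (1 - v))) x)
        = fun p : ℝ × ℝ => if cc p.1 < p.2 then
            S.indicator (fun _ => (1:ℝ≥0∞)) p.2 * ENNReal.ofReal (kk p.2 / (1 - p.1)) else 0 := by
      funext p
      rw [Function.uncurry, Set.indicator_apply]
      rfl
    rw [this]
    exact (Measurable.ite (measurableSet_lt (cc_meas.comp measurable_fst) measurable_snd)
      (((measurable_one.indicator hS).comp measurable_snd).mul
        (ENNReal.measurable_ofReal.comp
          ((kk_meas.comp measurable_snd).div (measurable_const.sub measurable_fst))))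
      measurable_const).aemeasurable
  rw [hswap, withDensity_apply _ hS, Measure.restrict_restrict hS,
    ← lintegral_indicator (hS.inter measurableSet_Ioi)]
  exact lintegral_congr fun x => inner_v S hS x
end

section
/- Let X be an open subset of ℝⁿ, let m and m₁, m₂, m₃, … be nonnegative Borel measures on X that are finite on compact sets, and suppose that m_i → m in the weak* (vague) topology, i.e. for every continuous function φ : X → ℝ with compact support, ∫_X φ dm_i → ∫_X φ dm. Let K ⊆ X be a compact set and let φ : X → ℝ be continuous. Then limsup_{i→∞} | ∫_K φ dm_i − ∫_K φ dm | ≤ ∫_{∂K} |φ| dm, where ∂K denotes the topological frontier of K. -/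
open MeasureTheory Filter Topology Set

/-- Let `X ⊆ ℝⁿ` be open, let `m, m₁, m₂, …` be nonnegative Borel measures on `X`,
finite on compact sets, with `mᵢ → m` vaguely (i.e. `∫ φ dmᵢ → ∫ φ dm` for every
continuous compactly supported `φ`). Then for every compact `K ⊆ X` and continuous
`φ : X → ℝ`,
`limsupᵢ | ∫_K φ dmᵢ − ∫_K φ dm | ≤ ∫_{∂K} |φ| dm`. -/
theorem limsup_restrict_le_frontier (n : ℕ) (X : Set (EuclideanSpace ℝ (Fin n)))
    (hX : IsOpen X) (m : Measure X) (mi : ℕ → Measure X)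
    (hm : ∀ K : Set X, IsCompact K → m K < ⊤)
    (hmi : ∀ i, ∀ K : Set X, IsCompact K → mi i K < ⊤)
    (hconv : ∀ φ : X → ℝ, Continuous φ → HasCompactSupport φ →
      Tendsto (fun i => ∫ x, φ x ∂(mi i)) atTop (nhds (∫ x, φ x ∂m)))
    (K : Set X) (hK : IsCompact K) (φ : X → ℝ) (hφ : Continuous φ) :
    limsup (fun i => |(∫ x in K, φ x ∂(mi i)) - ∫ x in K, φ x ∂m|) atTop
      ≤ ∫ x in frontier K, |φ x| ∂m := by
  haveI : LocallyCompactSpace X := hX.locallyCompactSpace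
  haveI : IsFiniteMeasureOnCompacts m := ⟨fun {s} hs => hm s hs⟩
  haveI hmic : ∀ i, IsFiniteMeasureOnCompacts (mi i) := fun i => ⟨fun {s} hs => hmi i s hs⟩
  have hKc : IsClosed K := hK.isClosed
  have hKm : MeasurableSet K := hKc.measurableSet
  have hfrK : frontier K ⊆ K := hKc.frontier_subset
  have hfrm : MeasurableSet (frontier K) := isClosed_frontier.measurableSet
  -- a compact neighborhood `L` of `K` and a bound `M` for `|φ|` on `L`
  obtain ⟨L, hL, hKL, -⟩ := exists_compact_between hK isOpen_univ (subset_univ K)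
  obtain ⟨M0, hM0⟩ := hL.exists_bound_of_continuousOn hφ.continuousOn
  set M := max M0 0 with hMdef
  have hMnonneg : (0:ℝ) ≤ M := le_max_right _ _
  have hML : ∀ x ∈ L, |φ x| ≤ M := fun x hx =>
    le_trans (by simpa [Real.norm_eq_abs] using hM0 x hx) (le_max_left _ _)
  set c := ∫ x in frontier K, |φ x| ∂m with hcdef
  -- it suffices to prove the bound with an `ε` of slack
  have main : ∀ ε : ℝ, 0 < ε →
      limsup (fun i => |(∫ x in K, φ x ∂(mi i)) - ∫ x in K, φ x ∂m|) atTop ≤ c + ε := by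
    intro ε hε
    set ε₀ := ε / (8 * (M + 1)) with hε₀def
    have hε₀ : 0 < ε₀ := by positivity
    set η := ENNReal.ofReal ε₀ with hηdef
    have hη : η ≠ 0 := by exact (ENNReal.ofReal_pos.mpr hε₀).ne'
    -- choose an open set `W ⊇ ∂K` with `m (W \ ∂K) < η`
    have hfrfin : m (frontier K) ≠ ⊤ := ((measure_mono hfrK).trans_lt (hm K hK)).ne
    obtain ⟨W, hWfr, hWopen, -, hWm⟩ := hfrm.exists_isOpen_diff_lt hfrfin hη
    set U := (interior K ∪ W) ∩ interior L with hUdef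
    have hUopen : IsOpen U := (isOpen_interior.union hWopen).inter isOpen_interior
    have hKU : K ⊆ U := by
      intro x hx
      refine ⟨?_, hKL hx⟩
      by_cases h : x ∈ interior K
      · exact Or.inl h
      · exact Or.inr (hWfr ⟨subset_closure hx, h⟩)
    have hUL : U ⊆ L := fun x hx => interior_subset hx.2
    have hUKW : U \ K ⊆ W \ frontier K := by
      rintro x ⟨hxU, hxK⟩
      rcases hxU.1 with h | h
      · exact absurd (interior_subset h) hxK
      · exact ⟨h, fun hfr => hxK (hfrK hfr)⟩
    have hUK : m (U \ K) < η := lt_of_le_of_lt (measure_mono hUKW) hWm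
    -- compact `k` with `K ⊆ interior k ⊆ k ⊆ U`
    obtain ⟨k, hk, hkcl, hKk, hkU⟩ := exists_compact_closed_between hK hUopen hKU
    -- Urysohn function `f` : 1 on K, 0 outside `interior k`
    obtain ⟨f, hf1, hf0, hfc, hf01⟩ := exists_continuous_one_zero_of_isCompact hK
      isOpen_interior.isClosed_compl (disjoint_compl_right_iff_subset.mpr hKk)
    -- the compact "collar" `A`
    set A := k \ interior K with hAdef
    have hA : IsCompact A := hk.diff isOpen_interior
    have hAm : MeasurableSet A := (hkcl.sdiff isOpen_interior).measurableSet
    have hAfin : m A ≠ ⊤ := hA.measure_lt_top.ne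
    have hfrA : frontier K ⊆ A := fun x hx => ⟨hKk.trans interior_subset (hfrK hx), hx.2⟩
    have hAfrUK : A \ frontier K ⊆ U \ K := by
      rintro x ⟨⟨hxk, hxi⟩, hxfr⟩
      refine ⟨hkU hxk, fun hxK => hxfr ⟨subset_closure hxK, hxi⟩⟩
    -- open `V ⊇ A` with `m (V \ A) < η`, inside `interior L`
    obtain ⟨V0, hAV0, hV0open, -, hV0m⟩ := hAm.exists_isOpen_diff_lt hAfin hη
    set V := V0 ∩ interior L with hVdef
    have hVopen : IsOpen V := hV0open.inter isOpen_interior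
    have hVm : MeasurableSet V := hVopen.measurableSet
    have hAV : A ⊆ V := fun x hx => ⟨hAV0 hx, (hkU hx.1).2⟩
    have hVL : V ⊆ L := fun x hx => interior_subset hx.2
    have hVfin : m V < ⊤ := (measure_mono hVL).trans_lt hL.measure_lt_top
    -- Urysohn function `g` : 1 on A, 0 outside V
    obtain ⟨g, hg1, hg0, hgc, hg01⟩ := exists_continuous_one_zero_of_isCompact hA
      hVopen.isClosed_compl (disjoint_compl_right_iff_subset.mpr hAV)
    -- pointwise bounds
    have hpt : ∀ x, |K.indicator φ x - f x * φ x| ≤ g x * |φ x| := by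
      intro x
      by_cases hx : x ∈ K
      · rw [indicator_of_mem hx, hf1 hx, Pi.one_apply, one_mul, sub_self, abs_zero]
        exact mul_nonneg (hg01 x).1 (abs_nonneg _)
      · rw [indicator_of_notMem hx, zero_sub, abs_neg, abs_mul]
        by_cases hfx : f x = 0
        · rw [hfx, abs_zero, zero_mul]
          exact mul_nonneg (hg01 x).1 (abs_nonneg _)
        · have hxk : x ∈ interior k := by
            by_contra h
            exact hfx (hf0 h)
          have hxA : x ∈ A := ⟨interior_subset hxk, fun h => hx (interior_subset h)⟩
          rw [hg1 hxA, Pi.one_apply, one_mul, abs_of_nonneg (hf01 x).1]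
          exact mul_le_of_le_one_left (abs_nonneg _) (hf01 x).2
    have hpt2 : ∀ x, |f x * φ x - K.indicator φ x| ≤ (U \ K).indicator (fun _ => M) x := by
      intro x
      by_cases hx : x ∈ K
      · rw [indicator_of_mem hx, hf1 hx, Pi.one_apply, one_mul, sub_self, abs_zero]
        exact indicator_nonneg (fun _ _ => hMnonneg) x
      · rw [indicator_of_notMem hx, sub_zero, abs_mul]
        by_cases hfx : f x = 0
        · rw [hfx, abs_zero, zero_mul]
          exact indicator_nonneg (fun _ _ => hMnonneg) x
        · have hxk : x ∈ interior k := by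
            by_contra h
            exact hfx (hf0 h)
          have hxU : x ∈ U := hkU (interior_subset hxk)
          have hxUK : x ∈ U \ K := ⟨hxU, hx⟩
          rw [indicator_of_mem hxUK]
          calc |f x| * |φ x| ≤ 1 * |φ x| :=
                mul_le_mul_of_nonneg_right (abs_le.mpr ⟨by linarith [(hf01 x).1], (hf01 x).2⟩)
                  (abs_nonneg _)
            _ = |φ x| := one_mul _
            _ ≤ M := hML x (hUL hxU)
    have hpt3 : ∀ x, g x * |φ x| ≤ V.indicator (fun y => |φ y|) x := by
      intro x
      by_cases hx : x ∈ V
      · rw [indicator_of_mem hx]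
        exact mul_le_of_le_one_left (abs_nonneg _) (hg01 x).2
      · rw [indicator_of_notMem hx, hg0 hx, Pi.zero_apply, zero_mul]
    -- integrability
    have hIOnL : IntegrableOn (fun x => |φ x|) L m :=
      (hφ.continuousOn.integrableOn_compact hL).abs
    have key : ∀ (ν : Measure X), IsFiniteMeasureOnCompacts ν →
        |(∫ x in K, φ x ∂ν) - ∫ x, f x * φ x ∂ν| ≤ ∫ x, g x * |φ x| ∂ν := by
      intro ν hν
      have IK : Integrable (K.indicator φ) ν :=
        (hφ.continuousOn.integrableOn_compact hK).integrable_indicator hKm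
      have If : Integrable (fun x => f x * φ x) ν :=
        (f.continuous.mul hφ).integrable_of_hasCompactSupport hfc.mul_right
      have Ig : Integrable (fun x => g x * |φ x|) ν :=
        (g.continuous.mul hφ.abs).integrable_of_hasCompactSupport hgc.mul_right
      rw [← integral_indicator hKm, ← integral_sub IK If]
      calc |∫ x, (K.indicator φ x - f x * φ x) ∂ν|
          ≤ ∫ x, |K.indicator φ x - f x * φ x| ∂ν := by
            simpa [Real.norm_eq_abs] using norm_integral_le_integral_norm
              (fun x => K.indicator φ x - f x * φ x) (μ := ν)
        _ ≤ ∫ x, g x * |φ x| ∂ν := integral_mono (IK.sub If).abs Ig hpt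
    -- the error on the `m` side
    have hm3 : |(∫ x, f x * φ x ∂m) - ∫ x in K, φ x ∂m| ≤ M * ε₀ := by
      have IK : Integrable (K.indicator φ) m :=
        (hφ.continuousOn.integrableOn_compact hK).integrable_indicator hKm
      have If : Integrable (fun x => f x * φ x) m :=
        (f.continuous.mul hφ).integrable_of_hasCompactSupport hfc.mul_right
      have hUKmeas : MeasurableSet (U \ K) := hUopen.measurableSet.diff hKm
      have hUKfin : m (U \ K) < ⊤ := hUK.trans ENNReal.ofReal_lt_top
      have Iind : Integrable ((U \ K).indicator (fun _ => M)) m :=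
        (integrableOn_const hUKfin.ne).integrable_indicator hUKmeas
      rw [← integral_indicator hKm, ← integral_sub If IK]
      calc |∫ x, (f x * φ x - K.indicator φ x) ∂m|
          ≤ ∫ x, |f x * φ x - K.indicator φ x| ∂m := by
            simpa [Real.norm_eq_abs] using norm_integral_le_integral_norm
              (fun x => f x * φ x - K.indicator φ x) (μ := m)
        _ ≤ ∫ x, (U \ K).indicator (fun _ => M) x ∂m :=
            integral_mono (If.sub IK).abs Iind hpt2
        _ = (m (U \ K)).toReal • M := integral_indicator_const M hUKmeas
        _ ≤ ε₀ * M := by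
            have : (m (U \ K)).toReal ≤ ε₀ := ENNReal.toReal_le_of_le_ofReal hε₀.le hUK.le
            simpa [smul_eq_mul] using mul_le_mul_of_nonneg_right this hMnonneg
        _ = M * ε₀ := mul_comm _ _
    -- the `g` integral against `m`
    have hgm : ∫ x, g x * |φ x| ∂m ≤ c + M * (2 * ε₀) := by
      have Ig : Integrable (fun x => g x * |φ x|) m :=
        (g.continuous.mul hφ.abs).integrable_of_hasCompactSupport hgc.mul_right
      have IV : Integrable (V.indicator (fun y => |φ y|)) m :=
        (hIOnL.mono_set hVL).integrable_indicator hVm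
      have h1 : ∫ x, g x * |φ x| ∂m ≤ ∫ x in V, |φ x| ∂m := by
        rw [← integral_indicator hVm]
        exact integral_mono Ig IV hpt3
      have hsplit : ∫ x in V, |φ x| ∂m
          = c + ∫ x in V \ frontier K, |φ x| ∂m := by
        rw [hcdef, ← setIntegral_union disjoint_sdiff_right
          (hVm.diff hfrm) (hIOnL.mono_set (hfrK.trans (hKL.trans interior_subset)))
          (hIOnL.mono_set ((diff_subset).trans hVL)),
          union_diff_cancel (hfrA.trans hAV)]
      have hmeas2 : m (V \ frontier K) ≤ ENNReal.ofReal (2 * ε₀) := by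
        have hsub : V \ frontier K ⊆ (V \ A) ∪ (A \ frontier K) := by
          rintro x ⟨hxV, hxfr⟩
          by_cases hxA : x ∈ A
          · exact Or.inr ⟨hxA, hxfr⟩
          · exact Or.inl ⟨hxV, hxA⟩
        calc m (V \ frontier K) ≤ m ((V \ A) ∪ (A \ frontier K)) := measure_mono hsub
          _ ≤ m (V \ A) + m (A \ frontier K) := measure_union_le _ _
          _ ≤ η + η := add_le_add (le_trans (measure_mono
                (show V \ A ⊆ V0 \ A from fun x hx => ⟨hx.1.1, hx.2⟩)) hV0m.le)
              ((measure_mono hAfrUK).trans hUK.le)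
          _ = ENNReal.ofReal (2 * ε₀) := by
              rw [hηdef, ← ENNReal.ofReal_add hε₀.le hε₀.le]; ring_nf
      have h2 : ∫ x in V \ frontier K, |φ x| ∂m ≤ M * (2 * ε₀) := by
        have hfin : m (V \ frontier K) < ⊤ := (measure_mono diff_subset).trans_lt hVfin
        have := norm_setIntegral_le_of_norm_le_const hfin
          (f := fun x => |φ x|) (C := M)
          (fun x hx => by simpa [Real.norm_eq_abs, abs_abs] using hML x (hVL hx.1))
        have htr : (m (V \ frontier K)).toReal ≤ 2 * ε₀ :=
          ENNReal.toReal_le_of_le_ofReal (by positivity) hmeas2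
        calc ∫ x in V \ frontier K, |φ x| ∂m
            ≤ |∫ x in V \ frontier K, |φ x| ∂m| := le_abs_self _
          _ ≤ M * (m (V \ frontier K)).toReal := by
              simpa [Real.norm_eq_abs, Measure.real] using this
          _ ≤ M * (2 * ε₀) := mul_le_mul_of_nonneg_left htr hMnonneg
      rw [hsplit] at h1
      linarith
    -- the two convergence statements
    have hconvf := hconv (fun x => f x * φ x) (f.continuous.mul hφ) hfc.mul_right
    have hconvg := hconv (fun x => g x * |φ x|) (g.continuous.mul hφ.abs) hgc.mul_right
    obtain ⟨N1, hN1⟩ := Metric.tendsto_atTop.mp hconvf (ε / 8) (by positivity)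
    obtain ⟨N2, hN2⟩ := Metric.tendsto_atTop.mp hconvg (ε / 8) (by positivity)
    -- conclude
    refine limsup_le_of_le (isCoboundedUnder_le_of_le atTop (fun i => abs_nonneg _)) ?_
    filter_upwards [eventually_ge_atTop N1, eventually_ge_atTop N2] with i hi1 hi2
    have h1 := key (mi i) (hmic i)
    have h2 := hN1 i hi1
    have h3 := hN2 i hi2
    rw [Real.dist_eq] at h2 h3
    have h4 : ∫ x, g x * |φ x| ∂(mi i) ≤ ∫ x, g x * |φ x| ∂m + ε / 8 := by
      have := abs_le.mp h3.le
      linarith [this.2]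
    have hM8 : M * ε₀ ≤ ε / 8 := by
      rw [hε₀def, mul_div_assoc']
      rw [div_le_div_iff₀ (by positivity) (by norm_num : (0:ℝ) < 8)]
      nlinarith [hMnonneg, hε.le]
    calc |(∫ x in K, φ x ∂(mi i)) - ∫ x in K, φ x ∂m|
        ≤ |(∫ x in K, φ x ∂(mi i)) - ∫ x, f x * φ x ∂(mi i)|
          + |(∫ x, f x * φ x ∂(mi i)) - ∫ x, f x * φ x ∂m|
          + |(∫ x, f x * φ x ∂m) - ∫ x in K, φ x ∂m| := by
          have t1 := abs_sub_le (∫ x in K, φ x ∂(mi i)) (∫ x, f x * φ x ∂(mi i))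
            (∫ x in K, φ x ∂m)
          have t2 := abs_sub_le (∫ x, f x * φ x ∂(mi i)) (∫ x, f x * φ x ∂m)
            (∫ x in K, φ x ∂m)
          linarith
      _ ≤ (∫ x, g x * |φ x| ∂(mi i)) + ε / 8 + M * ε₀ :=
          add_le_add (add_le_add h1 h2.le) hm3
      _ ≤ (∫ x, g x * |φ x| ∂m + ε / 8) + ε / 8 + M * ε₀ := by linarith
      _ ≤ (c + M * (2 * ε₀) + ε / 8) + ε / 8 + M * ε₀ := by linarith
      _ ≤ c + ε := by linarith
  refine le_of_not_gt fun hlt => ?_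
  have h := main ((limsup (fun i => |(∫ x in K, φ x ∂(mi i)) - ∫ x in K, φ x ∂m|) atTop - c) / 2)
    (by linarith)
  linarith
end
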